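/- arXiv:2312.10855 — 4 statements merged into one kernel-verified Lean document; each statement's English description precedes it below -/
import Mathlib

section
/- Let B = (b_1, ..., b_n) be a Ferrers board, i.e. 0 ≤ b_1 ≤ b_2 ≤ ... ≤ b_n are nonnegative integers and B consists of the cells (i, j) with 1 ≤ i ≤ n and 1 ≤ j ≤ b_i. Then for every real number x, the rook polynomial of B factors as p(B, x) = Σ_{k=0}^{n} r_k(B) · x↓_{n-k} = Π_{i=1}^{n} (x + b_i - (i - 1)). -/
open scoped Classical

/-- The falling factorial `x↓ₖ = ∏_{i=0}^{k-1} (x - i)`. -/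
noncomputable def ffall (x : ℝ) (k : ℕ) : ℝ := ∏ i ∈ Finset.range k, (x - i)

/-- The `m`-falling factorial `x↓_{k,m} = ∏_{i=0}^{k-1} (x - m·i)`. -/
noncomputable def mfall (x : ℝ) (m k : ℕ) : ℝ := ∏ i ∈ Finset.range k, (x - m * i)

/-- The predicate that `b 0 ≤ b 1 ≤ ... ≤ b (n-1)`, i.e. the column heights of a
Ferrers board with `n` columns are weakly increasing.  (Column `i`, for `0 ≤ i < n`,
corresponds to column `i+1` = `b_{i+1}` of the paper.) -/
def FerrersMono (n : ℕ) (b : ℕ → ℕ) : Prop := ∀ i, i + 1 < n → b i ≤ b (i + 1)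

/-- The cells of the Ferrers board with column heights `b 0, …, b (n-1)`:
pairs `(i, j)` with `i < n` (a column, 0-indexed) and `1 ≤ j ≤ b i` (a row, 1-indexed). -/
def cellFinset (n : ℕ) (b : ℕ → ℕ) : Finset (ℕ × ℕ) :=
  (Finset.range n ×ˢ Finset.Icc 1 ((Finset.range n).sup b)).filter fun p => p.2 ≤ b p.1

/-- The file placements of `k` rooks on the board: `k` cells, no two in the same column. -/
def filePlacements (n : ℕ) (b : ℕ → ℕ) (k : ℕ) : Finset (Finset (ℕ × ℕ)) :=
  (cellFinset n b).powerset.filter fun P =>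
    P.card = k ∧ ∀ p ∈ P, ∀ q ∈ P, p ≠ q → p.1 ≠ q.1

/-- The `k`-th rook number `r_k(B)`: the number of placements of `k` cells of the board,
no two in the same row or column. -/
def rookNum (n : ℕ) (b : ℕ → ℕ) (k : ℕ) : ℕ :=
  ((cellFinset n b).powerset.filter fun P =>
    P.card = k ∧ ∀ p ∈ P, ∀ q ∈ P, p ≠ q → p.1 ≠ q.1 ∧ p.2 ≠ q.2).card

/-- The (0-indexed) level of the (1-indexed) row `j`: level `t` (0-indexed) consists of
rows `t*m + 1, …, t*m + m`. -/
def levelOf (m j : ℕ) : ℕ := (j - 1) / m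

/-- The `k`-th `m`-level rook number `r_{k,m}(B)`: the number of placements of `k` cells
of the board, no two in the same column or in the same level. -/
def mLevelRookNum (m n : ℕ) (b : ℕ → ℕ) (k : ℕ) : ℕ :=
  ((cellFinset n b).powerset.filter fun P =>
    P.card = k ∧ ∀ p ∈ P, ∀ q ∈ P, p ≠ q →
      p.1 ≠ q.1 ∧ levelOf m p.2 ≠ levelOf m q.2).card

/-- A placement has no two cells in the same level. -/
def NoLevelRepeat (m : ℕ) (F : Finset (ℕ × ℕ)) : Prop :=
  ∀ p ∈ F, ∀ q ∈ F, p ≠ q → levelOf m p.2 ≠ levelOf m q.2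

/-- The `m`-weight of a file placement `F`: the product over all rows `j` of
`1↓_{f_j, m}` where `f_j` is the number of cells of `F` in row `j`.  (Rows containing
no cell of `F` contribute `1↓_{0,m} = 1`, so it suffices to take the product over the
rows meeting `F`.) -/
noncomputable def wtm (m : ℕ) (F : Finset (ℕ × ℕ)) : ℝ :=
  ∏ j ∈ F.image Prod.snd, mfall 1 m ((F.filter fun p => p.2 = j).card)

/-- The `k`-th `m`-weighted file placement number `f_{k,m}(B)`. -/
noncomputable def fWeightNum (m n : ℕ) (b : ℕ → ℕ) (k : ℕ) : ℝ :=
  ∑ F ∈ filePlacements n b k, wtm m F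

/-- The `m`-floor of `b`: the largest multiple of `m` that is at most `b`. -/
def mfloor (m b : ℕ) : ℕ := m * (b / m)

/-- A singleton board (w.r.t. `m`): a Ferrers board such that whenever column `i` has
nonzero remainder mod `m`, the `m`-floor strictly increases at the next column. -/
def IsSingletonBoard (m n : ℕ) (b : ℕ → ℕ) : Prop :=
  FerrersMono n b ∧ ∀ i, i + 1 < n → b i - mfloor m (b i) ≠ 0 →
    mfloor m (b i) < mfloor m (b (i + 1))

/-- The cells of `F` lying in level `l` (0-indexed). -/
def rooksInLevel (m : ℕ) (F : Finset (ℕ × ℕ)) (l : ℕ) : Finset (ℕ × ℕ) :=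
  F.filter fun p => levelOf m p.2 = l

/-- `l` is the distinguished level of `F`: it contains at least two cells of `F`,
it has the fewest cells among all levels containing at least two cells of `F`,
and it is the lowest such level (any lower level with at least two cells of `F`
contains strictly more of them). -/
def DistinguishedLevel (m : ℕ) (F : Finset (ℕ × ℕ)) (l : ℕ) : Prop :=
  2 ≤ (rooksInLevel m F l).card ∧
  (∀ l', 2 ≤ (rooksInLevel m F l').card →
    (rooksInLevel m F l).card ≤ (rooksInLevel m F l').card) ∧
  (∀ l' < l, 2 ≤ (rooksInLevel m F l').card →
    (rooksInLevel m F l).card < (rooksInLevel m F l').card)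

/-- The class `𝓟(F₀)` of a file placement `F₀` with distinguished level `l`:
all file placements on the board with the same number of rooks as `F₀` which agree
with `F₀` outside level `l`, whose rooks in level `l` occupy the same columns as those
of `F₀`, and whose leftmost rook in level `l` occupies the same cell as the leftmost
rook of `F₀` in level `l`. -/
def classOf (m n : ℕ) (b : ℕ → ℕ) (l : ℕ) (F₀ : Finset (ℕ × ℕ)) :
    Finset (Finset (ℕ × ℕ)) :=
  (filePlacements n b F₀.card).filter fun F =>
    (F.filter fun p => levelOf m p.2 ≠ l) = (F₀.filter fun p => levelOf m p.2 ≠ l) ∧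
    (rooksInLevel m F l).image Prod.fst = (rooksInLevel m F₀ l).image Prod.fst ∧
    ∀ p ∈ rooksInLevel m F l, (∀ q ∈ rooksInLevel m F l, p.1 ≤ q.1) → p ∈ F₀

-- auxiliary definitions and lemmas

def plc (n : ℕ) (b : ℕ → ℕ) (k : ℕ) : Finset (Finset (ℕ × ℕ)) :=
  (cellFinset n b).powerset.filter fun P =>
    P.card = k ∧ ∀ p ∈ P, ∀ q ∈ P, p ≠ q → p.1 ≠ q.1 ∧ p.2 ≠ q.2

lemma rookNum_eq_plc (n : ℕ) (b : ℕ → ℕ) (k : ℕ) : rookNum n b k = (plc n b k).card := rfl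

lemma mem_cellFinset {n : ℕ} {b : ℕ → ℕ} {p : ℕ × ℕ} :
    p ∈ cellFinset n b ↔ p.1 < n ∧ 1 ≤ p.2 ∧ p.2 ≤ b p.1 := by
  simp only [cellFinset, Finset.mem_filter, Finset.mem_product, Finset.mem_range,
    Finset.mem_Icc]
  constructor
  · rintro ⟨⟨h1, h2, _⟩, h4⟩; exact ⟨h1, h2, h4⟩
  · rintro ⟨h1, h2, h3⟩
    exact ⟨⟨h1, h2, le_trans h3 (Finset.le_sup (Finset.mem_range.2 h1))⟩, h3⟩

lemma mem_plc {n : ℕ} {b : ℕ → ℕ} {k : ℕ} {P : Finset (ℕ × ℕ)} :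
    P ∈ plc n b k ↔ (∀ p ∈ P, p.1 < n ∧ 1 ≤ p.2 ∧ p.2 ≤ b p.1) ∧ P.card = k ∧
      (∀ p ∈ P, ∀ q ∈ P, p ≠ q → p.1 ≠ q.1 ∧ p.2 ≠ q.2) := by
  simp only [plc, Finset.mem_filter, Finset.mem_powerset, Finset.subset_iff, and_assoc]
  constructor
  · rintro ⟨h1, h2, h3⟩; exact ⟨fun p hp => mem_cellFinset.1 (h1 hp), h2, h3⟩
  · rintro ⟨h1, h2, h3⟩; exact ⟨fun {p} hp => mem_cellFinset.2 (h1 p hp), h2, h3⟩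

lemma plc_zero (n : ℕ) (b : ℕ → ℕ) : plc n b 0 = {∅} := by
  ext P
  simp only [Finset.mem_singleton, mem_plc, Finset.card_eq_zero]
  constructor
  · rintro ⟨-, h, -⟩; exact h
  · rintro rfl; simp

lemma rookNum_zero (n : ℕ) (b : ℕ → ℕ) : rookNum n b 0 = 1 := by
  rw [rookNum_eq_plc, plc_zero]; simp

lemma rows_card {n k : ℕ} {b : ℕ → ℕ} {P : Finset (ℕ × ℕ)} (hP : P ∈ plc n b k) :
    (P.image Prod.snd).card = k := by
  obtain ⟨-, hcard, hpair⟩ := mem_plc.1 hP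
  rw [Finset.card_image_of_injOn, hcard]
  intro p hp q hq hpq
  by_contra hne
  exact (hpair p hp q hq hne).2 hpq

lemma rows_subset {n k : ℕ} {b : ℕ → ℕ} {P : Finset (ℕ × ℕ)}
    (hmono : ∀ i, i < n → b i ≤ b n) (hP : P ∈ plc n b k) :
    P.image Prod.snd ⊆ Finset.Icc 1 (b n) := by
  obtain ⟨hcell, -, -⟩ := mem_plc.1 hP
  intro j hj
  obtain ⟨q, hq, rfl⟩ := Finset.mem_image.1 hj
  obtain ⟨h1, h2, h3⟩ := hcell q hq
  exact Finset.mem_Icc.2 ⟨h2, le_trans h3 (hmono q.1 h1)⟩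

lemma plc_empty_of_rows {n k : ℕ} {b : ℕ → ℕ} (hmono : ∀ i, i < n → b i ≤ b n)
    (hk : b n < k) : plc n b k = ∅ := by
  rw [Finset.eq_empty_iff_forall_notMem]
  intro P hP
  have h1 := rows_card hP
  have h2 := Finset.card_le_card (rows_subset hmono hP)
  rw [h1, Nat.card_Icc] at h2
  omega

lemma plc_empty_of_cols {n k : ℕ} {b : ℕ → ℕ} (hk : n < k) : plc n b k = ∅ := by
  rw [Finset.eq_empty_iff_forall_notMem]
  intro P hP
  obtain ⟨hcell, hcard, hpair⟩ := mem_plc.1 hP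
  have h1 : (P.image Prod.fst).card = k := by
    rw [Finset.card_image_of_injOn, hcard]
    intro p hp q hq hpq
    by_contra hne
    exact (hpair p hp q hq hne).1 hpq
  have h2 : P.image Prod.fst ⊆ Finset.range n := by
    intro i hi
    obtain ⟨q, hq, rfl⟩ := Finset.mem_image.1 hi
    exact Finset.mem_range.2 (hcell q hq).1
  have := Finset.card_le_card h2
  rw [h1, Finset.card_range] at this
  omega

lemma plc_succ_card (n k : ℕ) (b : ℕ → ℕ) (hmono : ∀ i, i < n → b i ≤ b n) :
    (plc (n + 1) b (k + 1)).card =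
      (plc n b (k + 1)).card + (b n - k) * (plc n b k).card := by
  classical
  have hsplit := Finset.card_filter_add_card_filter_not
    (s := plc (n + 1) b (k + 1)) (p := fun P => ∀ p ∈ P, p.1 ≠ n)
  -- Part A : placements avoiding column n
  have hA : (plc (n + 1) b (k + 1)).filter (fun P => ∀ p ∈ P, p.1 ≠ n) =
      plc n b (k + 1) := by
    ext P
    simp only [Finset.mem_filter, mem_plc]
    constructor
    · rintro ⟨⟨hcell, hcard, hpair⟩, havoid⟩
      refine ⟨fun p hp => ?_, hcard, hpair⟩
      obtain ⟨h1, h2, h3⟩ := hcell p hp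
      exact ⟨lt_of_le_of_ne (Nat.lt_succ_iff.1 h1) (havoid p hp), h2, h3⟩
    · rintro ⟨hcell, hcard, hpair⟩
      refine ⟨⟨fun p hp => ?_, hcard, hpair⟩, fun p hp => ?_⟩
      · obtain ⟨h1, h2, h3⟩ := hcell p hp
        exact ⟨Nat.lt_succ_of_lt h1, h2, h3⟩
      · exact Nat.ne_of_lt (hcell p hp).1
  -- Part B : placements using column n
  have hB : (plc (n + 1) b (k + 1)).filter (fun P => ¬ ∀ p ∈ P, p.1 ≠ n) =
      (plc n b k).biUnion (fun P' =>
        (Finset.Icc 1 (b n) \ P'.image Prod.snd).image (fun j => insert (n, j) P')) := by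
    ext P
    simp only [Finset.mem_filter, Finset.mem_biUnion, Finset.mem_image, Finset.mem_sdiff]
    constructor
    · rintro ⟨hP, hcol⟩
      push_neg at hcol
      obtain ⟨p, hp, hpn⟩ := hcol
      obtain ⟨hcell, hcard, hpair⟩ := mem_plc.1 hP
      refine ⟨P.erase p, ?_, p.2, ⟨?_, ?_⟩, ?_⟩
      · rw [mem_plc]
        refine ⟨fun q hq => ?_, ?_, ?_⟩
        · obtain ⟨hq, hqP⟩ := Finset.mem_erase.1 hq
          obtain ⟨h1, h2, h3⟩ := hcell q hqP
          refine ⟨lt_of_le_of_ne (Nat.lt_succ_iff.1 h1) ?_, h2, h3⟩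
          intro hqn
          exact (hpair q hqP p hp hq).1 (hqn.trans hpn.symm)
        · rw [Finset.card_erase_of_mem hp, hcard]; omega
        · intro a ha c hc hac
          exact hpair a (Finset.mem_of_mem_erase ha) c (Finset.mem_of_mem_erase hc) hac
      · obtain ⟨h1, h2, h3⟩ := hcell p hp
        exact Finset.mem_Icc.2 ⟨h2, by rw [← hpn]; exact h3⟩
      · intro hmem
        obtain ⟨q, hq, hq2⟩ := hmem
        obtain ⟨hqp, hqP⟩ := Finset.mem_erase.1 hq
        exact (hpair q hqP p hp hqp).2 hq2
      · have : (n, p.2) = p := by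
          ext <;> simp [hpn.symm]
        rw [this, Finset.insert_erase hp]
    · rintro ⟨P', hP', j, ⟨hj, hjrows⟩, rfl⟩
      obtain ⟨hj1, hj2⟩ := Finset.mem_Icc.1 hj
      obtain ⟨hcell, hcard, hpair⟩ := mem_plc.1 hP'
      have hnot : (n, j) ∉ P' := fun h => lt_irrefl n (hcell _ h).1
      have hnewold : ∀ q ∈ P', (n, j).1 ≠ q.1 ∧ (n, j).2 ≠ q.2 := by
        intro q hq
        refine ⟨(Nat.ne_of_lt (hcell q hq).1).symm, fun hj => ?_⟩
        exact hjrows ⟨q, hq, hj.symm⟩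
      refine ⟨mem_plc.2 ⟨fun p hp => ?_, ?_, ?_⟩, ?_⟩
      · rcases Finset.mem_insert.1 hp with rfl | hp
        · exact ⟨Nat.lt_succ_self n, hj1, hj2⟩
        · obtain ⟨h1, h2, h3⟩ := hcell p hp
          exact ⟨Nat.lt_succ_of_lt h1, h2, h3⟩
      · rw [Finset.card_insert_of_notMem hnot, hcard]
      · intro p hp q hq hpq
        rcases Finset.mem_insert.1 hp with rfl | hp <;>
          rcases Finset.mem_insert.1 hq with rfl | hq
        · exact absurd rfl hpq
        · exact hnewold q hq
        · have := hnewold p hp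
          exact ⟨this.1.symm, this.2.symm⟩
        · exact hpair p hp q hq hpq
      · push_neg
        exact ⟨(n, j), Finset.mem_insert_self _ _, rfl⟩
  -- card of part B
  have hBcard : ((plc n b k).biUnion (fun P' =>
      (Finset.Icc 1 (b n) \ P'.image Prod.snd).image (fun j => insert (n, j) P'))).card =
      (b n - k) * (plc n b k).card := by
    rw [Finset.card_biUnion]
    · rw [Finset.sum_congr rfl (fun P' hP' => ?_), Finset.sum_const, smul_eq_mul,
        Nat.mul_comm]
      · have hfst : ∀ q ∈ P', q.1 < n := fun q hq => ((mem_plc.1 hP').1 q hq).1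
        rw [Finset.card_image_of_injOn, Finset.card_sdiff_of_subset (rows_subset hmono hP'),
          rows_card hP', Nat.card_Icc, Nat.add_sub_cancel]
        intro j₁ hj₁ j₂ hj₂ heq
        change insert (n, j₁) P' = insert (n, j₂) P' at heq
        have : (n, j₁) ∈ insert (n, j₂) P' := by
          rw [← heq]; exact Finset.mem_insert_self _ _
        rcases Finset.mem_insert.1 this with h | h
        · exact (Prod.mk.injEq _ _ _ _ ▸ h).2
        · exact absurd (hfst _ h) (lt_irrefl n)
    · intro P₁ hP₁ P₂ hP₂ hne
      have key : ∀ (P' : Finset (ℕ × ℕ)), P' ∈ plc n b k → ∀ j,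
          (insert (n, j) P').filter (fun p => p.1 ≠ n) = P' := by
        intro P' hP' j
        rw [Finset.filter_insert, if_neg (by simp)]
        exact Finset.filter_true_of_mem
          (fun q hq => Nat.ne_of_lt ((mem_plc.1 hP').1 q hq).1)
      simp only [Finset.disjoint_left, Finset.mem_image, Finset.mem_sdiff]
      rintro P ⟨j₁, hj₁, rfl⟩ ⟨j₂, hj₂, heq⟩
      exact hne (by rw [← key P₁ hP₁ j₁, ← heq, key P₂ hP₂ j₂])
  rw [← hsplit, hA, hB, hBcard]

lemma ffall_succ (x : ℝ) (k : ℕ) : ffall x (k + 1) = ffall x k * (x - k) :=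
  Finset.prod_range_succ _ _

lemma ferrers_le {n : ℕ} {b : ℕ → ℕ} (hb : FerrersMono n b) :
    ∀ {i j : ℕ}, i ≤ j → j < n → b i ≤ b j := by
  intro i j
  induction j with
  | zero => intro hij _; interval_cases i; exact le_rfl
  | succ j ih =>
    intro hij hj
    rcases Nat.eq_or_lt_of_le hij with rfl | h
    · exact le_rfl
    · exact (ih (Nat.lt_succ_iff.1 h) (Nat.lt_of_succ_lt hj)).trans (hb j hj)

lemma rookNum_rec (n k : ℕ) (b : ℕ → ℕ) (hmono : ∀ i, i < n → b i ≤ b n) :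
    (rookNum (n + 1) b (k + 1) : ℝ) =
      (rookNum n b (k + 1) : ℝ) + ((b n : ℝ) - k) * rookNum n b k := by
  rcases le_or_gt k (b n) with h | h
  · rw [rookNum_eq_plc, rookNum_eq_plc, rookNum_eq_plc, plc_succ_card n k b hmono]
    push_cast [Nat.cast_sub h]
    ring
  · have h0 : plc n b k = ∅ := plc_empty_of_rows hmono h
    rw [rookNum_eq_plc, rookNum_eq_plc, rookNum_eq_plc, plc_succ_card n k b hmono, h0]
    simp


/-- Goldman–Joichi–White.  For a Ferrers board `B = (b_1, …, b_n)`,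
`p(B,x) = Σ_{k=0}^n r_k(B) x↓_{n-k} = ∏_{i=1}^n (x + b_i - (i-1))`. -/
theorem statement0 (n : ℕ) (b : ℕ → ℕ) (hb : FerrersMono n b) (x : ℝ) :
    ∑ k ∈ Finset.range (n + 1), (rookNum n b k : ℝ) * ffall x (n - k) =
      ∏ i ∈ Finset.range n, (x + (b i : ℝ) - (i : ℝ)) := by
  induction n with
  | zero => simp [rookNum_zero, ffall]
  | succ n ih =>
    have hb' : FerrersMono n b := fun i hi => hb i (Nat.lt_succ_of_lt hi)
    have hmono : ∀ i, i < n → b i ≤ b n :=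
      fun i hi => ferrers_le hb (le_of_lt hi) (Nat.lt_succ_self n)
    set E : ℝ := (∑ k ∈ Finset.range (n + 1), (rookNum n b (k + 1) : ℝ) * ffall x (n - k))
      + (∑ k ∈ Finset.range (n + 1), ((b n : ℝ) - k) * (rookNum n b k : ℝ) * ffall x (n - k))
      + ffall x (n + 1) with hE
    have hL : (∑ k ∈ Finset.range (n + 1 + 1), (rookNum (n + 1) b k : ℝ) * ffall x (n + 1 - k))
        = E := by
      rw [Finset.sum_range_succ' (fun k => (rookNum (n + 1) b k : ℝ) * ffall x (n + 1 - k)) (n + 1)]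
      have hstep : ∀ k ∈ Finset.range (n + 1),
          (rookNum (n + 1) b (k + 1) : ℝ) * ffall x (n + 1 - (k + 1)) =
          (rookNum n b (k + 1) : ℝ) * ffall x (n - k) +
            ((b n : ℝ) - k) * (rookNum n b k : ℝ) * ffall x (n - k) := by
        intro k _
        rw [Nat.succ_sub_succ, rookNum_rec n k b hmono]
        ring
      rw [Finset.sum_congr rfl hstep, Finset.sum_add_distrib, rookNum_zero, hE]
      push_cast
      ring
    have hS1 : (∑ k ∈ Finset.range (n + 1), (rookNum n b k : ℝ) * ffall x (n + 1 - k)) =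
        (∑ k ∈ Finset.range (n + 1), (rookNum n b (k + 1) : ℝ) * ffall x (n - k))
          + ffall x (n + 1) := by
      rw [Finset.sum_range_succ' (fun k => (rookNum n b k : ℝ) * ffall x (n + 1 - k)) n,
        Finset.sum_range_succ (fun k => (rookNum n b (k + 1) : ℝ) * ffall x (n - k)) n,
        rookNum_zero, rookNum_eq_plc, plc_empty_of_cols (Nat.lt_succ_self n)]
      simp [Nat.succ_sub_succ]
    have hR : (∑ k ∈ Finset.range (n + 1), (rookNum n b k : ℝ) * ffall x (n - k))
        * (x + (b n : ℝ) - n) = E := by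
      rw [Finset.sum_mul]
      have hstep : ∀ k ∈ Finset.range (n + 1),
          (rookNum n b k : ℝ) * ffall x (n - k) * (x + (b n : ℝ) - n) =
          (rookNum n b k : ℝ) * ffall x (n + 1 - k) +
            ((b n : ℝ) - k) * (rookNum n b k : ℝ) * ffall x (n - k) := by
        intro k hk
        have hk' : k ≤ n := Nat.lt_succ_iff.1 (Finset.mem_range.1 hk)
        have hf : ffall x (n + 1 - k) = ffall x (n - k) * (x - ((n : ℝ) - k)) := by
          have hnk : n + 1 - k = (n - k) + 1 := by omega
          rw [hnk, ffall_succ, Nat.cast_sub hk']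
        rw [hf]
        ring
      rw [Finset.sum_congr rfl hstep, Finset.sum_add_distrib, hS1, hE]
      ring
    calc (∑ k ∈ Finset.range (n + 1 + 1), (rookNum (n + 1) b k : ℝ) * ffall x (n + 1 - k))
        = E := hL
      _ = (∑ k ∈ Finset.range (n + 1), (rookNum n b k : ℝ) * ffall x (n - k))
            * (x + (b n : ℝ) - n) := hR.symm
      _ = ∏ i ∈ Finset.range (n + 1), (x + (b i : ℝ) - (i : ℝ)) := by
          rw [ih hb', Finset.prod_range_succ]
end

section
/- Fix a positive integer m. Let B = (b_1, ..., b_n) be a singleton board, i.e. a Ferrers board such that whenever b_i - ⌊b_i⌋_m ≠ 0 (with i < n) one has ⌊b_i⌋_m < ⌊b_{i+1}⌋_m, where ⌊b⌋_m denotes the largest multiple of m that is at most b. Then for every real number x, the m-level rook polynomial of B factors as p_m(B, x) = Σ_{k=0}^{n} r_{k,m}(B) · x↓_{n-k,m} = Π_{i=1}^{n} (x + b_i - m(i - 1)). -/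
open scoped Classical

namespace BR

lemma mem_cellFinset {n : ℕ} {b : ℕ → ℕ} {p : ℕ × ℕ} :
    p ∈ cellFinset n b ↔ p.1 < n ∧ 1 ≤ p.2 ∧ p.2 ≤ b p.1 := by
  unfold cellFinset
  simp only [Finset.mem_filter, Finset.mem_product, Finset.mem_range, Finset.mem_Icc]
  constructor
  · rintro ⟨⟨h1, h2, _⟩, h4⟩; exact ⟨h1, h2, h4⟩
  · rintro ⟨h1, h2, h3⟩
    exact ⟨⟨h1, h2, h3.trans (Finset.le_sup (Finset.mem_range.mpr h1))⟩, h3⟩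

noncomputable def mPl (m n : ℕ) (b : ℕ → ℕ) (k : ℕ) : Finset (Finset (ℕ × ℕ)) :=
  (cellFinset n b).powerset.filter fun P =>
    P.card = k ∧ ∀ p ∈ P, ∀ q ∈ P, p ≠ q →
      p.1 ≠ q.1 ∧ levelOf m p.2 ≠ levelOf m q.2

lemma rookNum_eq (m n : ℕ) (b : ℕ → ℕ) (k : ℕ) :
    mLevelRookNum m n b k = (mPl m n b k).card := rfl

lemma mem_mPl {m n k : ℕ} {b : ℕ → ℕ} {P : Finset (ℕ × ℕ)} :
    P ∈ mPl m n b k ↔ (∀ p ∈ P, p.1 < n ∧ 1 ≤ p.2 ∧ p.2 ≤ b p.1) ∧ P.card = k ∧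
      ∀ p ∈ P, ∀ q ∈ P, p ≠ q → p.1 ≠ q.1 ∧ levelOf m p.2 ≠ levelOf m q.2 := by
  unfold mPl
  simp only [Finset.mem_filter, Finset.mem_powerset, Finset.subset_iff]
  constructor
  · rintro ⟨h1, h2, h3⟩; exact ⟨fun p hp => mem_cellFinset.mp (h1 hp), h2, h3⟩
  · rintro ⟨h1, h2, h3⟩; exact ⟨fun {p} hp => mem_cellFinset.mpr (h1 p hp), h2, h3⟩

lemma rookNum_zero_eq_one (m n : ℕ) (b : ℕ → ℕ) : mLevelRookNum m n b 0 = 1 := by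
  rw [rookNum_eq]
  have : mPl m n b 0 = {∅} := by
    ext P
    simp only [Finset.mem_singleton, mem_mPl, Finset.card_eq_zero]
    constructor
    · rintro ⟨_, h, _⟩; exact h
    · rintro rfl
      refine ⟨by simp, rfl, by simp⟩
  rw [this, Finset.card_singleton]

lemma rookNum_eq_zero {m n k : ℕ} {b : ℕ → ℕ} (h : n < k) : mLevelRookNum m n b k = 0 := by
  rw [rookNum_eq, Finset.card_eq_zero, Finset.eq_empty_iff_forall_notMem]
  intro P hP
  rw [mem_mPl] at hP
  obtain ⟨h1, h2, h3⟩ := hP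
  have hinj : Set.InjOn Prod.fst (P : Set (ℕ × ℕ)) := by
    intro p hp q hq hpq
    by_contra hne
    exact (h3 p hp q hq hne).1 hpq
  have hsub : P.image Prod.fst ⊆ Finset.range n := by
    intro i hi
    obtain ⟨p, hp, rfl⟩ := Finset.mem_image.mp hi
    exact Finset.mem_range.mpr (h1 p hp).1
  have := Finset.card_le_card hsub
  rw [Finset.card_image_of_injOn hinj, Finset.card_range, h2] at this
  omega

lemma ferrers_mono {n : ℕ} {b : ℕ → ℕ} (h : FerrersMono n b) :
    ∀ i j, i ≤ j → j < n → b i ≤ b j := by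
  intro i j hij hj
  induction j with
  | zero =>
    have : i = 0 := by omega
    rw [this]
  | succ j ih =>
    rcases Nat.eq_or_lt_of_le hij with rfl | hlt
    · exact le_rfl
    · exact (ih (by omega) (by omega)).trans (h j hj)

lemma mfloor_le {m c : ℕ} : mfloor m c ≤ c := Nat.mul_div_le c m

lemma le_mfloor_succ {m n : ℕ} {b : ℕ → ℕ} (hm : 0 < m) (hB : IsSingletonBoard m n b)
    {i : ℕ} (hi : i + 1 < n) : b i ≤ mfloor m (b (i + 1)) := by
  obtain ⟨hmono, hsing⟩ := hB
  by_cases h : b i - mfloor m (b i) = 0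
  · have h1 : mfloor m (b i) ≤ b i := mfloor_le
    have h3 : b i / m ≤ b (i+1) / m := Nat.div_le_div_right (hmono i hi)
    have h4 : mfloor m (b i) ≤ mfloor m (b (i+1)) := Nat.mul_le_mul_left m h3
    omega
  · have h4 := hsing i hi h
    unfold mfloor at h4 ⊢
    have h5 : b i / m < b (i+1) / m := by
      by_contra hc
      exact absurd (Nat.mul_le_mul_left m (by omega : b (i+1) / m ≤ b i / m)) (by omega)
    have h6 : b i < m * (b i / m) + m := by
      have h7 := Nat.div_add_mod (b i) m
      have h8 := Nat.mod_lt (b i) hm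
      omega
    have h9 : m * (b i / m) + m ≤ m * (b (i+1) / m) := by
      have := Nat.mul_le_mul_left m (by omega : b i / m + 1 ≤ b (i+1) / m)
      rw [Nat.mul_succ] at this
      exact this
    omega

lemma col_le_mfloor {m n : ℕ} {b : ℕ → ℕ} (hm : 0 < m) (hB : IsSingletonBoard m (n+1) b)
    {i : ℕ} (hi : i < n) : b i ≤ mfloor m (b n) := by
  obtain ⟨j, rfl⟩ : ∃ j, n = j + 1 := ⟨n - 1, by omega⟩
  calc b i ≤ b j := ferrers_mono hB.1 i j (by omega) (by omega)
  _ ≤ mfloor m (b (j+1)) := le_mfloor_succ hm hB (by omega)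

lemma level_mul_le {m c j : ℕ} (hm : 0 < m) (hj1 : 1 ≤ j) (hj2 : j ≤ mfloor m c) :
    (levelOf m j + 1) * m ≤ mfloor m c := by
  unfold levelOf mfloor at *
  have h1 : (j-1) / m * m ≤ j - 1 := Nat.div_mul_le_self _ _
  have h2 : (j-1) / m < c / m := by
    rw [Nat.div_lt_iff_lt_mul hm]
    have : m * (c / m) = c / m * m := Nat.mul_comm _ _
    omega
  calc ((j-1)/m + 1) * m ≤ (c/m) * m := Nat.mul_le_mul_right m (by omega)
  _ = m * (c/m) := Nat.mul_comm _ _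

lemma interval_disjoint {m : ℕ} (hm : 0 < m) {l l' : ℕ} (h : l < l') :
    Disjoint (Finset.Icc (l * m + 1) (l * m + m)) (Finset.Icc (l' * m + 1) (l' * m + m)) := by
  rw [Finset.disjoint_left]
  intro j hj hj'
  rw [Finset.mem_Icc] at hj hj'
  have : (l + 1) * m ≤ l' * m := Nat.mul_le_mul_right m (by omega)
  rw [Nat.add_one_mul] at this
  omega

lemma filter_level_mem_card {m B : ℕ} (hm : 0 < m) (L : Finset ℕ)
    (hL : ∀ l ∈ L, (l + 1) * m ≤ B) :
    ((Finset.Icc 1 B).filter fun j => levelOf m j ∈ L).card = m * L.card := by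
  have heq : ((Finset.Icc 1 B).filter fun j => levelOf m j ∈ L)
      = L.biUnion fun l => Finset.Icc (l * m + 1) (l * m + m) := by
    ext j
    simp only [Finset.mem_filter, Finset.mem_Icc, Finset.mem_biUnion]
    constructor
    · rintro ⟨⟨hj1, hj2⟩, hjL⟩
      refine ⟨levelOf m j, hjL, ?_, ?_⟩
      · have := Nat.div_mul_le_self (j-1) m
        unfold levelOf
        omega
      · have h3 : j - 1 < ((j-1)/m + 1) * m :=
          (Nat.div_lt_iff_lt_mul hm).mp (Nat.lt_succ_self _)
        rw [Nat.add_one_mul] at h3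
        unfold levelOf
        omega
    · rintro ⟨l, hl, hj1, hj2⟩
      have hlB := hL l hl
      rw [Nat.add_one_mul] at hlB
      have hlev : levelOf m j = l := by
        unfold levelOf
        exact Nat.div_eq_of_lt_le (by omega) (by rw [Nat.add_one_mul]; omega)
      exact ⟨⟨by omega, by omega⟩, hlev ▸ hl⟩
  rw [heq, Finset.card_biUnion]
  · rw [Finset.sum_congr rfl (fun l _ => by rw [Nat.card_Icc]; omega : ∀ l ∈ L, (Finset.Icc (l*m+1) (l*m+m)).card = m)]
    rw [Finset.sum_const, smul_eq_mul, Nat.mul_comm]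
  · intro l hl l' hl' hne
    rcases Nat.lt_or_ge l l' with h | h
    · exact interval_disjoint hm h
    · exact (interval_disjoint hm (by omega)).symm

lemma avail_card {m B : ℕ} (hm : 0 < m) (L : Finset ℕ)
    (hL : ∀ l ∈ L, (l + 1) * m ≤ B) :
    ((Finset.Icc 1 B).filter fun j => levelOf m j ∉ L).card = B - m * L.card ∧
      m * L.card ≤ B := by
  have h1 := Finset.card_filter_add_card_filter_not
    (s := Finset.Icc 1 B) (p := fun j => levelOf m j ∈ L)
  rw [filter_level_mem_card hm L hL, Nat.card_Icc] at h1
  omega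

lemma level_bound_of_mem {m n k : ℕ} {b : ℕ → ℕ} (hm : 0 < m)
    (hB : IsSingletonBoard m (n+1) b) {P : Finset (ℕ × ℕ)} (hP : P ∈ mPl m n b k) :
    ((P.image fun p => levelOf m p.2).card = k ∧
      ∀ l ∈ P.image fun p => levelOf m p.2, (l + 1) * m ≤ b n) := by
  obtain ⟨hc, hk, hpw⟩ := mem_mPl.mp hP
  constructor
  · rw [Finset.card_image_of_injOn, hk]
    intro p hp q hq h
    by_contra hne
    exact (hpw p hp q hq hne).2 h
  · intro l hl
    obtain ⟨p, hp, rfl⟩ := Finset.mem_image.mp hl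
    obtain ⟨h1, h2, h3⟩ := hc p hp
    exact (level_mul_le hm h2 (h3.trans (col_le_mfloor hm hB h1))).trans mfloor_le

lemma mul_le_of_nonzero {m n k : ℕ} {b : ℕ → ℕ} (hm : 0 < m)
    (hB : IsSingletonBoard m (n+1) b) (h : mLevelRookNum m n b k ≠ 0) :
    m * k ≤ b n := by
  rw [rookNum_eq] at h
  obtain ⟨P, hP⟩ := Finset.card_ne_zero.mp h
  obtain ⟨hLcard, hLB⟩ := level_bound_of_mem hm hB hP
  obtain ⟨_, hle⟩ := avail_card hm _ hLB
  rw [hLcard] at hle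
  exact hle

lemma recursion {m n k : ℕ} {b : ℕ → ℕ} (hm : 0 < m) (hB : IsSingletonBoard m (n+1) b) :
    mLevelRookNum m (n+1) b (k+1) =
      mLevelRookNum m n b (k+1) + (b n - m * k) * mLevelRookNum m n b k := by
  classical
  rw [rookNum_eq, rookNum_eq, rookNum_eq]
  have hsplit := Finset.card_filter_add_card_filter_not
    (s := mPl m (n+1) b (k+1)) (p := fun P => ∀ p ∈ P, ¬ p.1 = n)
  have h1 : (mPl m (n+1) b (k+1)).filter (fun P => ∀ p ∈ P, ¬ p.1 = n)
      = mPl m n b (k+1) := by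
    ext P
    simp only [Finset.mem_filter, mem_mPl]
    constructor
    · rintro ⟨⟨hc, hk, hpw⟩, hno⟩
      refine ⟨fun p hp => ⟨?_, (hc p hp).2⟩, hk, hpw⟩
      have := (hc p hp).1
      have := hno p hp
      omega
    · rintro ⟨hc, hk, hpw⟩
      exact ⟨⟨fun p hp => ⟨by have := (hc p hp).1; omega, (hc p hp).2⟩, hk, hpw⟩,
        fun p hp => by have := (hc p hp).1; omega⟩
  set A := (mPl m (n+1) b (k+1)).filter (fun P => ¬ ∀ p ∈ P, ¬ p.1 = n) with hA
  have hmaps : ∀ P ∈ A, P.filter (fun p => ¬ p.1 = n) ∈ mPl m n b k := by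
    intro P hP
    rw [hA, Finset.mem_filter] at hP
    obtain ⟨hPm, hex⟩ := hP
    push_neg at hex
    obtain ⟨p₀, hp₀, hp₀1⟩ := hex
    obtain ⟨hc, hk, hpw⟩ := mem_mPl.mp hPm
    have hone : P.filter (fun p => p.1 = n) = {p₀} := by
      ext q
      simp only [Finset.mem_filter, Finset.mem_singleton]
      constructor
      · rintro ⟨hq, hq1⟩
        by_contra hne
        exact (hpw q hq p₀ hp₀ hne).1 (hq1.trans hp₀1.symm)
      · rintro rfl
        exact ⟨hp₀, hp₀1⟩
    have hcards := Finset.card_filter_add_card_filter_not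
      (s := P) (p := fun p => p.1 = n)
    rw [hone, Finset.card_singleton, hk] at hcards
    rw [mem_mPl]
    refine ⟨?_, by omega, ?_⟩
    · intro p hp
      rw [Finset.mem_filter] at hp
      obtain ⟨h4, h5, h6⟩ := hc p hp.1
      exact ⟨by omega, h5, h6⟩
    · intro p hp q hq hne
      rw [Finset.mem_filter] at hp hq
      exact hpw p hp.1 q hq.1 hne
  have hcardA := Finset.card_eq_sum_card_fiberwise hmaps
  have hfiber : ∀ P' ∈ mPl m n b k,
      (A.filter fun P => P.filter (fun p => ¬ p.1 = n) = P').card = b n - m * k := by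
    intro P' hP'
    obtain ⟨hc', hk', hpw'⟩ := mem_mPl.mp hP'
    obtain ⟨hLcard, hLB⟩ := level_bound_of_mem hm hB hP'
    set L := P'.image fun p => levelOf m p.2 with hLdef
    obtain ⟨havail, hle⟩ := avail_card hm L hLB
    rw [hLcard] at havail
    rw [← havail]
    refine (Finset.card_bij (fun j _ => insert (n, j) P') ?_ ?_ ?_).symm
    · -- maps into fiber
      intro j hj
      rw [Finset.mem_filter, Finset.mem_Icc] at hj
      obtain ⟨⟨hj1, hj2⟩, hjL⟩ := hj
      have hnotin : (n, j) ∉ P' := fun h => absurd ((hc' _ h).1) (lt_irrefl n)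
      have hfil : (insert (n, j) P').filter (fun p => ¬ p.1 = n) = P' := by
        rw [Finset.filter_insert, if_neg (by simp)]
        exact Finset.filter_eq_self.mpr (fun p hp => by have := (hc' p hp).1; omega)
      rw [Finset.mem_filter, hA, Finset.mem_filter]
      refine ⟨⟨?_, ?_⟩, hfil⟩
      · rw [mem_mPl]
        refine ⟨?_, ?_, ?_⟩
        · intro p hp
          rcases Finset.mem_insert.mp hp with rfl | hp
          · exact ⟨by omega, hj1, hj2⟩
          · obtain ⟨h4, h5, h6⟩ := hc' p hp
            exact ⟨by omega, h5, h6⟩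
        · rw [Finset.card_insert_of_notMem hnotin, hk']
        · intro p hp q hq hne
          rcases Finset.mem_insert.mp hp with rfl | hp <;>
            rcases Finset.mem_insert.mp hq with rfl | hq
          · exact absurd rfl hne
          · refine ⟨fun h => absurd ((hc' q hq).1) (by omega), fun h => hjL ?_⟩
            rw [hLdef]
            exact Finset.mem_image.mpr ⟨q, hq, h.symm⟩
          · refine ⟨fun h => absurd ((hc' p hp).1) (by omega), fun h => hjL ?_⟩
            rw [hLdef]
            exact Finset.mem_image.mpr ⟨p, hp, h⟩
          · exact hpw' p hp q hq hne
      · push_neg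
        exact ⟨(n, j), Finset.mem_insert_self _ _, rfl⟩
    · -- injective
      intro j hj j' hj' heq
      have heq' : insert (n, j) P' = insert (n, j') P' := heq
      have : (n, j) ∈ insert (n, j') P' := heq' ▸ Finset.mem_insert_self _ _
      rcases Finset.mem_insert.mp this with h | h
      · exact (Prod.mk.injEq _ _ _ _ ▸ h).2
      · exact absurd ((hc' _ h).1) (lt_irrefl n)
    · -- surjective
      intro P hP
      rw [Finset.mem_filter, hA, Finset.mem_filter] at hP
      obtain ⟨⟨hPm, hex⟩, hfil⟩ := hP
      push_neg at hex
      obtain ⟨p₀, hp₀, hp₀1⟩ := hex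
      obtain ⟨hc, hk, hpw⟩ := mem_mPl.mp hPm
      have hp₀eq : (n, p₀.2) = p₀ := by rw [← hp₀1]
      obtain ⟨_, hj1, hj2⟩ := hc _ hp₀
      rw [hp₀1] at hj2
      refine ⟨p₀.2, ?_, ?_⟩
      · rw [Finset.mem_filter, Finset.mem_Icc]
        refine ⟨⟨hj1, hj2⟩, ?_⟩
        intro hmem
        rw [hLdef] at hmem
        obtain ⟨q, hq, hlq⟩ := Finset.mem_image.mp hmem
        have hqP : q ∈ P ∧ ¬ q.1 = n := by
          rw [← hfil] at hq
          exact Finset.mem_filter.mp hq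
        have hne : q ≠ p₀ := fun h => hqP.2 (by rw [h, hp₀1])
        exact (hpw q hqP.1 p₀ hp₀ hne).2 hlq
      · -- insert (n, p₀.2) P' = P
        ext q
        rw [Finset.mem_insert]
        constructor
        · rintro (rfl | hq)
          · exact hp₀eq ▸ hp₀
          · rw [← hfil] at hq
            exact (Finset.mem_filter.mp hq).1
        · intro hq
          by_cases hqn : q.1 = n
          · left
            have : q = p₀ := by
              by_contra hne
              exact (hpw q hq p₀ hp₀ hne).1 (by rw [hqn, hp₀1])
            rw [this, ← hp₀eq]
          · right
            rw [← hfil, Finset.mem_filter]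
            exact ⟨hq, hqn⟩
  rw [Finset.sum_congr rfl hfiber, Finset.sum_const, smul_eq_mul, Nat.mul_comm] at hcardA
  rw [h1, hcardA] at hsplit
  omega

lemma recursion_real {m n k : ℕ} {b : ℕ → ℕ} (hm : 0 < m) (hB : IsSingletonBoard m (n+1) b) :
    (mLevelRookNum m (n+1) b (k+1) : ℝ) =
      (mLevelRookNum m n b (k+1) : ℝ) +
        ((b n : ℝ) - (m : ℝ) * (k : ℝ)) * (mLevelRookNum m n b k : ℝ) := by
  have key : ((b n - m * k : ℕ) : ℝ) * (mLevelRookNum m n b k : ℝ)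
      = ((b n : ℝ) - (m : ℝ) * (k : ℝ)) * (mLevelRookNum m n b k : ℝ) := by
    rcases Nat.eq_zero_or_pos (mLevelRookNum m n b k) with h | h
    · rw [h]; simp
    · rw [Nat.cast_sub (mul_le_of_nonzero hm hB (by omega))]
      push_cast
      ring
  rw [recursion hm hB, Nat.cast_add, Nat.cast_mul, key]

end BR

theorem statement1' (m : ℕ) (hm : 0 < m) (n : ℕ) (b : ℕ → ℕ)
    (hB : IsSingletonBoard m n b) (x : ℝ) :
    ∑ k ∈ Finset.range (n + 1), (mLevelRookNum m n b k : ℝ) * mfall x m (n - k) =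
      ∏ i ∈ Finset.range n, (x + (b i : ℝ) - (m : ℝ) * (i : ℝ)) := by
  induction n with
  | zero =>
    simp [BR.rookNum_zero_eq_one, mfall]
  | succ n ih =>
    have hB' : IsSingletonBoard m n b :=
      ⟨fun i hi => hB.1 i (by omega), fun i hi h => hB.2 i (by omega) h⟩
    have IH := ih hB'
    have hS1 : (∑ k ∈ Finset.range (n+1), (mLevelRookNum m n b (k+1) : ℝ) * mfall x m (n-k))
        + mfall x m (n+1) =
        ∑ k ∈ Finset.range (n+1), (mLevelRookNum m n b k : ℝ) * mfall x m (n-k)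
          * (x - (m:ℝ) * ((n:ℝ) - (k:ℝ))) := by
      have e1 := Finset.sum_range_succ'
        (fun k => (mLevelRookNum m n b k : ℝ) * mfall x m (n+1-k)) (n+1)
      have e2 := Finset.sum_range_succ
        (fun k => (mLevelRookNum m n b k : ℝ) * mfall x m (n+1-k)) (n+1)
      simp only [Nat.succ_sub_succ, Nat.sub_zero, BR.rookNum_zero_eq_one, Nat.cast_one,
        one_mul, BR.rookNum_eq_zero (Nat.lt_succ_self n), Nat.cast_zero, zero_mul,
        add_zero, Nat.sub_self] at e1 e2
      rw [e2] at e1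
      rw [← e1]
      refine Finset.sum_congr rfl fun k hk => ?_
      rw [Finset.mem_range] at hk
      have h3 : n + 1 - k = (n - k) + 1 := by omega
      rw [h3]
      have h4 : mfall x m ((n-k)+1) = mfall x m (n-k) * (x - (m:ℝ) * ((n-k : ℕ) : ℝ)) :=
        Finset.prod_range_succ _ _
      rw [h4, Nat.cast_sub (by omega : k ≤ n)]
      ring
    calc ∑ k ∈ Finset.range (n+1+1), (mLevelRookNum m (n+1) b k : ℝ) * mfall x m (n+1-k)
        = (∑ k ∈ Finset.range (n+1),
            (mLevelRookNum m (n+1) b (k+1) : ℝ) * mfall x m (n+1-(k+1)))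
          + (mLevelRookNum m (n+1) b 0 : ℝ) * mfall x m (n+1-0) :=
        Finset.sum_range_succ' _ (n+1)
      _ = (∑ k ∈ Finset.range (n+1),
            ((mLevelRookNum m n b (k+1) : ℝ) * mfall x m (n-k)
              + ((b n : ℝ) - (m:ℝ) * (k:ℝ))
                * ((mLevelRookNum m n b k : ℝ) * mfall x m (n-k))))
          + mfall x m (n+1) := by
        rw [BR.rookNum_zero_eq_one]
        norm_num
        refine Finset.sum_congr rfl fun k hk => ?_
        rw [Nat.succ_sub_succ, BR.recursion_real hm hB]
        ring
      _ = ((∑ k ∈ Finset.range (n+1), (mLevelRookNum m n b (k+1) : ℝ) * mfall x m (n-k))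
            + mfall x m (n+1))
          + ∑ k ∈ Finset.range (n+1),
              ((b n : ℝ) - (m:ℝ) * (k:ℝ)) * ((mLevelRookNum m n b k : ℝ) * mfall x m (n-k)) := by
        rw [Finset.sum_add_distrib]
        ring
      _ = ∑ k ∈ Finset.range (n+1),
            ((mLevelRookNum m n b k : ℝ) * mfall x m (n-k) * (x - (m:ℝ) * ((n:ℝ) - (k:ℝ)))
              + ((b n : ℝ) - (m:ℝ) * (k:ℝ)) * ((mLevelRookNum m n b k : ℝ) * mfall x m (n-k))) := by
        rw [hS1, Finset.sum_add_distrib]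
      _ = ∑ k ∈ Finset.range (n+1),
            ((mLevelRookNum m n b k : ℝ) * mfall x m (n-k))
              * (x + (b n : ℝ) - (m:ℝ) * (n:ℝ)) := by
        refine Finset.sum_congr rfl fun k hk => ?_
        ring
      _ = (∑ k ∈ Finset.range (n+1), (mLevelRookNum m n b k : ℝ) * mfall x m (n-k))
            * (x + (b n : ℝ) - (m:ℝ) * (n:ℝ)) := by
        rw [← Finset.sum_mul]
      _ = ∏ i ∈ Finset.range (n+1), (x + (b i : ℝ) - (m:ℝ) * (i:ℝ)) := by
        rw [IH, Finset.prod_range_succ]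
/-- Briggs–Remmel.  For a singleton board `B = (b_1, …, b_n)` w.r.t. `m`,
`p_m(B,x) = Σ_{k=0}^n r_{k,m}(B) x↓_{n-k,m} = ∏_{i=1}^n (x + b_i - m(i-1))`. -/
theorem statement1 (m : ℕ) (hm : 0 < m) (n : ℕ) (b : ℕ → ℕ)
    (hB : IsSingletonBoard m n b) (x : ℝ) :
    ∑ k ∈ Finset.range (n + 1), (mLevelRookNum m n b k : ℝ) * mfall x m (n - k) =
      ∏ i ∈ Finset.range n, (x + (b i : ℝ) - (m : ℝ) * (i : ℝ)) := by
  exact statement1' m hm n b hB x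
end

section
/- Fix a positive integer m and let B = (b_1, ..., b_n) be a Ferrers board, regarded as sitting inside the board with n levels (rows 1 through mn). For 1 ≤ j ≤ n let l_j be the number of cells of B in the j-th level from the top, i.e. in level n + 1 - j. Then for every real number x, p_m(B, x) = Π_{j=1}^{n} (x + l_j - m(j - 1)). -/
open scoped Classical

/-- The `j`-th level number (for `1 ≤ j ≤ n`) of the board: the number of its cells in
the `j`-th level from the top, i.e. in the (1-indexed) level `n + 1 - j`, which is the
0-indexed level `n - j`. -/
def levelNum (m n : ℕ) (b : ℕ → ℕ) (j : ℕ) : ℕ :=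
  ((cellFinset n b).filter fun p => levelOf m p.2 = n - j).card

/-!
Work with an arbitrary down-closed set of cells `S` on a set `C` of columns and induct on `|S|`.
Let `p` be a highest cell, in level `t₀`. The placements avoiding `p` are those of `S \ {p}`;
removing the rook on `p` matches the placements containing `p` with the placements, one rook
smaller, of the cells not attacked by `p`. These form a board on the `|C| - 1` other columns,
lying below level `t₀`, so `p_m(S) = p_m(S \ {p}) + p_m(S')` with `S'` on one column less.
On the product side, deleting `p` lowers the level number of level `t₀` by one, while `S'` has no
cells from level `t₀` up and, in every level below `t₀`, exactly `m` cells fewer than `S` (the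
column of `p` is full there). After shifting the index `j` past `t₀`, the product for `S'` is the
product for `S` with the factor of level `t₀` omitted, and the two recursions agree.
-/

namespace LevelRook

open Finset

variable {m : ℕ}

lemma levelOf_eq_iff {y t : ℕ} (hm : 0 < m) (hy : 1 ≤ y) :
    levelOf m y = t ↔ m * t + 1 ≤ y ∧ y ≤ m * t + m := by
  rw [levelOf, Nat.div_eq_iff hm, mul_comm t m]
  generalize m * t = k
  omega

lemma levelOf_lt_iff {y t : ℕ} (hm : 0 < m) (hy : 1 ≤ y) : levelOf m y < t ↔ y ≤ m * t := by
  rw [levelOf, Nat.div_lt_iff_lt_mul hm, mul_comm]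
  omega

lemma levelOf_mono : Monotone (levelOf m) :=
  fun _ _ h => Nat.div_le_div_right (Nat.sub_le_sub_right h 1)

def NonAttacking (m : ℕ) (p q : ℕ × ℕ) : Prop :=
  p.1 ≠ q.1 ∧ levelOf m p.2 ≠ levelOf m q.2

lemma NonAttacking.symm {p q : ℕ × ℕ} (h : NonAttacking m p q) : NonAttacking m q p :=
  ⟨h.1.symm, h.2.symm⟩

def placements (m : ℕ) (S : Finset (ℕ × ℕ)) (k : ℕ) : Finset (Finset (ℕ × ℕ)) :=
  S.powerset.filter fun P =>
    P.card = k ∧ ∀ p ∈ P, ∀ q ∈ P, p ≠ q →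
      p.1 ≠ q.1 ∧ levelOf m p.2 ≠ levelOf m q.2

lemma mLevelRookNum_eq_card_placements (n : ℕ) (b : ℕ → ℕ) (k : ℕ) :
    mLevelRookNum m n b k = (placements m (cellFinset n b) k).card :=
  rfl

lemma mem_placements {S P : Finset (ℕ × ℕ)} {k : ℕ} :
    P ∈ placements m S k ↔
      P ⊆ S ∧ P.card = k ∧ (P : Set (ℕ × ℕ)).Pairwise (NonAttacking m) := by
  simp only [placements, mem_filter, mem_powerset]
  rfl

lemma placements_empty (k : ℕ) :
    placements m ∅ k = if k = 0 then {∅} else ∅ := by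
  ext P
  simp only [mem_placements, subset_empty]
  split_ifs with hk <;> aesop

lemma filter_notMem_placements (S : Finset (ℕ × ℕ)) (p : ℕ × ℕ) (k : ℕ) :
    (placements m S k).filter (p ∉ ·) = placements m (S.erase p) k := by
  ext P
  simp only [mem_filter, mem_placements, subset_erase]
  tauto

noncomputable def contract (m : ℕ) (S : Finset (ℕ × ℕ)) (p : ℕ × ℕ) : Finset (ℕ × ℕ) :=
  S.filter fun q => NonAttacking m q p

lemma notMem_contract (S : Finset (ℕ × ℕ)) (p : ℕ × ℕ) : p ∉ contract m S p :=
  fun h => (mem_filter.1 h).2.1 rfl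

lemma contract_ssubset {S : Finset (ℕ × ℕ)} {p : ℕ × ℕ} (hp : p ∈ S) : contract m S p ⊂ S :=
  ssubset_of_subset_of_ne (filter_subset _ _) fun h => notMem_contract S p (h ▸ hp)

lemma card_filter_mem_placements {S : Finset (ℕ × ℕ)} {p : ℕ × ℕ} (hp : p ∈ S) (k : ℕ) :
    ((placements m S (k + 1)).filter (p ∈ ·)).card = (placements m (contract m S p) k).card := by
  refine card_nbij' (·.erase p) (insert p ·) ?_ ?_ ?_ ?_
  · intro P hP
    simp only [coe_filter, Set.mem_ofPred_eq, mem_placements] at hP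
    obtain ⟨⟨hPS, hcard, hpair⟩, hpP⟩ := hP
    refine mem_placements.2 ⟨fun q hq => ?_, by rw [card_erase_of_mem hpP, hcard]; rfl,
      hpair.mono (by simp)⟩
    obtain ⟨hqp, hqP⟩ := mem_erase.1 hq
    exact mem_filter.2 ⟨hPS hqP, hpair hqP hpP hqp⟩
  · intro Q hQ
    obtain ⟨hQS, hcard, hpair⟩ := mem_placements.1 (mem_coe.1 hQ)
    have hpQ : p ∉ Q := fun h => notMem_contract S p (hQS h)
    simp only [coe_filter, Set.mem_ofPred_eq, mem_placements, mem_insert_self, and_true]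
    refine ⟨insert_subset hp (hQS.trans (filter_subset _ _)),
      by rw [card_insert_of_notMem hpQ, hcard], ?_⟩
    rw [coe_insert, Set.pairwise_insert]
    exact ⟨hpair, fun q hq _ => ⟨((mem_filter.1 (hQS hq)).2).symm, (mem_filter.1 (hQS hq)).2⟩⟩
  · intro P hP
    exact insert_erase (mem_filter.1 hP).2
  · intro Q hQ
    exact erase_insert fun h => notMem_contract S p ((mem_placements.1 hQ).1 h)

/-- `n` is the number of columns of the ambient board. -/
noncomputable def rookPoly (m n : ℕ) (S : Finset (ℕ × ℕ)) (x : ℝ) : ℝ :=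
  ∑ k ∈ range (n + 1), ((placements m S k).card : ℝ) * mfall x m (n - k)

lemma rookPoly_empty (n : ℕ) (x : ℝ) : rookPoly m n ∅ x = mfall x m n := by
  rw [rookPoly, sum_eq_single 0 (fun k _ hk => by simp [placements_empty, hk]) (by simp)]
  simp [placements_empty]

lemma rookPoly_succ {S : Finset (ℕ × ℕ)} {p : ℕ × ℕ} (hp : p ∈ S) (n : ℕ) (x : ℝ) :
    rookPoly m (n + 1) S x = rookPoly m (n + 1) (S.erase p) x + rookPoly m n (contract m S p) x := by
  have hsplit : ∀ k, ((placements m S k).card : ℝ) =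
      ((placements m S k).filter (p ∈ ·)).card + (placements m (S.erase p) k).card := by
    intro k
    rw [← filter_notMem_placements, ← Nat.cast_add, card_filter_add_card_filter_not]
  have hzero : (placements m S 0).filter (p ∈ ·) = ∅ :=
    filter_eq_empty_iff.2 fun P hP => by
      rw [card_eq_zero.1 (mem_placements.1 hP).2.1]
      exact notMem_empty p
  simp only [rookPoly, hsplit, add_mul, sum_add_distrib]
  rw [add_comm]
  congr 1
  rw [sum_range_succ', hzero]
  simp [card_filter_mem_placements hp]

def levelCount (m : ℕ) (S : Finset (ℕ × ℕ)) (t : ℕ) : ℕ :=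
  (S.filter fun p => levelOf m p.2 = t).card

lemma levelNum_eq_levelCount (n : ℕ) (b : ℕ → ℕ) (j : ℕ) :
    levelNum m n b j = levelCount m (cellFinset n b) (n - j) :=
  rfl

lemma levelCount_erase_add {S : Finset (ℕ × ℕ)} {p : ℕ × ℕ} (hp : p ∈ S) (t : ℕ) :
    levelCount m (S.erase p) t + (if levelOf m p.2 = t then 1 else 0) = levelCount m S t := by
  rw [levelCount, levelCount, filter_erase]
  split_ifs with h
  · exact card_erase_add_one (mem_filter.2 ⟨hp, h⟩)
  · rw [erase_eq_of_notMem (by simp [h]), add_zero]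

/-- `∏_{j=1}^n (x + l_j - m(j-1))`, where `l_j` is the number of cells of `S` in the
(0-indexed) level `n - j`. -/
noncomputable def levelProd (m n : ℕ) (S : Finset (ℕ × ℕ)) (x : ℝ) : ℝ :=
  ∏ j ∈ Icc 1 n, (x + (levelCount m S (n - j) : ℝ) - (m : ℝ) * ((j : ℝ) - 1))

lemma levelProd_empty (n : ℕ) (x : ℝ) : levelProd m n ∅ x = mfall x m n := by
  rw [levelProd, mfall, ← Ico_add_one_right_eq_Icc, prod_Ico_eq_prod_range, Nat.add_sub_cancel]
  refine prod_congr rfl fun i _ => ?_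
  simp [levelCount]

lemma prod_Icc_erase {M : Type*} [CommMonoid M] (f : ℕ → M) {n a : ℕ} (ha₁ : 1 ≤ a)
    (ha : a ≤ n + 1) :
    ∏ j ∈ (Icc 1 (n + 1)).erase a, f j = ∏ j ∈ Icc 1 n, f (if j < a then j else j + 1) := by
  symm
  refine prod_nbij' (fun j => if j < a then j else j + 1) (fun j => if j < a then j else j - 1)
    ?_ ?_ ?_ ?_ fun _ _ => rfl <;> intro j hj <;> simp only [mem_Icc, mem_erase] at hj ⊢ <;>
    split_ifs <;> omega

structure IsBoard (m : ℕ) (C : Finset ℕ) (S : Finset (ℕ × ℕ)) : Prop where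
  col_mem : ∀ p ∈ S, p.1 ∈ C
  one_le_row : ∀ p ∈ S, 1 ≤ p.2
  row_le : ∀ p ∈ S, p.2 ≤ m * C.card
  down_closed : ∀ p ∈ S, ∀ y, 1 ≤ y → y ≤ p.2 → (p.1, y) ∈ S

lemma isBoard_cellFinset {n : ℕ} {b : ℕ → ℕ} (hbd : ∀ i, i < n → b i ≤ m * n) :
    IsBoard m (range n) (cellFinset n b) := by
  have hmem : ∀ p, p ∈ cellFinset n b ↔ p.1 < n ∧ 1 ≤ p.2 ∧ p.2 ≤ b p.1 := by
    intro p
    simp only [cellFinset, mem_filter, mem_product, mem_range, mem_Icc]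
    exact ⟨fun h => ⟨h.1.1, h.1.2.1, h.2⟩,
      fun h => ⟨⟨h.1, h.2.1, h.2.2.trans (le_sup (mem_range.2 h.1))⟩, h.2.2⟩⟩
  refine ⟨fun p hp => ?_, fun p hp => ?_, fun p hp => ?_, fun p hp y hy₁ hy => ?_⟩ <;>
    rw [hmem] at hp
  · exact mem_range.2 hp.1
  · exact hp.2.1
  · rw [card_range]; exact hp.2.2.trans (hbd _ hp.1)
  · exact (hmem _).2 ⟨hp.1, hy₁, hy.trans hp.2.2⟩

section TopCell

variable {C : Finset ℕ} {S : Finset (ℕ × ℕ)} {p : ℕ × ℕ}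

lemma IsBoard.pos_of_mem (hS : IsBoard m C S) (hp : p ∈ S) : 0 < m := by
  have h₁ := hS.one_le_row p hp
  have h₂ := hS.row_le p hp
  exact Nat.pos_of_ne_zero fun h => by rw [h, zero_mul] at h₂; omega

lemma IsBoard.levelOf_lt_card (hS : IsBoard m C S) (hp : p ∈ S) : levelOf m p.2 < C.card :=
  (levelOf_lt_iff (hS.pos_of_mem hp) (hS.one_le_row p hp)).2 (hS.row_le p hp)

lemma IsBoard.erase_top (hS : IsBoard m C S) (htop : ∀ q ∈ S, q.2 ≤ p.2) :
    IsBoard m C (S.erase p) := by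
  refine ⟨fun q hq => hS.col_mem q (mem_of_mem_erase hq),
    fun q hq => hS.one_le_row q (mem_of_mem_erase hq),
    fun q hq => hS.row_le q (mem_of_mem_erase hq), fun q hq y hy₁ hy => ?_⟩
  obtain ⟨hqp, hqS⟩ := mem_erase.1 hq
  refine mem_erase.2 ⟨fun h => hqp ?_, hS.down_closed q hqS y hy₁ hy⟩
  have := htop q hqS
  rw [← h] at this ⊢
  exact Prod.ext rfl (by simp only at this; omega)

lemma levelOf_lt_of_mem_contract (htop : ∀ q ∈ S, q.2 ≤ p.2) {q : ℕ × ℕ}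
    (hq : q ∈ contract m S p) : levelOf m q.2 < levelOf m p.2 := by
  obtain ⟨hqS, -, hne⟩ := mem_filter.1 hq
  exact (levelOf_mono (htop q hqS)).lt_of_ne hne

lemma IsBoard.contract_top (hS : IsBoard m C S) (hp : p ∈ S) (htop : ∀ q ∈ S, q.2 ≤ p.2) :
    IsBoard m (C.erase p.1) (contract m S p) := by
  have hm := hS.pos_of_mem hp
  have hcard := hS.levelOf_lt_card hp
  refine ⟨fun q hq => ?_, fun q hq => hS.one_le_row q (filter_subset _ _ hq), fun q hq => ?_,
    fun q hq y hy₁ hy => ?_⟩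
  · obtain ⟨hqS, hcol, -⟩ := mem_filter.1 hq
    exact mem_erase.2 ⟨hcol, hS.col_mem q hqS⟩
  · have hlt := levelOf_lt_of_mem_contract htop hq
    rw [levelOf_lt_iff hm (hS.one_le_row q (filter_subset _ _ hq))] at hlt
    rw [card_erase_of_mem (hS.col_mem p hp)]
    exact hlt.trans (Nat.mul_le_mul_left m (by omega))
  · obtain ⟨hqS, hcol, -⟩ := mem_filter.1 hq
    refine mem_filter.2 ⟨hS.down_closed q hqS y hy₁ hy, hcol, ?_⟩
    exact ((levelOf_mono hy).trans_lt (levelOf_lt_of_mem_contract htop hq)).ne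

lemma levelCount_eq_zero_of_top_lt (htop : ∀ q ∈ S, q.2 ≤ p.2) {t : ℕ}
    (ht : levelOf m p.2 < t) : levelCount m S t = 0 :=
  card_eq_zero.2 <| filter_eq_empty_iff.2 fun q hq hqt =>
    (levelOf_mono (htop q hq)).not_gt (hqt ▸ ht)

lemma levelCount_contract_eq_zero (htop : ∀ q ∈ S, q.2 ≤ p.2) {t : ℕ}
    (ht : levelOf m p.2 ≤ t) : levelCount m (contract m S p) t = 0 :=
  card_eq_zero.2 <| filter_eq_empty_iff.2 fun _ hq hqt =>
    (levelOf_lt_of_mem_contract htop hq).not_ge (hqt ▸ ht)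

/-- Below the level of the top cell `p`, the column of `p` is full, contributing `m` cells. -/
lemma levelCount_eq_levelCount_contract_add (hS : IsBoard m C S) (hp : p ∈ S) {t : ℕ}
    (ht : t < levelOf m p.2) :
    levelCount m S t = levelCount m (contract m S p) t + m := by
  have hm := hS.pos_of_mem hp
  have hcol : (S.filter fun q => levelOf m q.2 = t).filter (fun q => q.1 = p.1) =
      (Icc (m * t + 1) (m * t + m)).image (Prod.mk p.1) := by
    have hpt := (levelOf_eq_iff hm (hS.one_le_row p hp)).1 rfl
    have hmt : m * t + m ≤ m * levelOf m p.2 := by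
      simpa [mul_add] using Nat.mul_le_mul_left m (Nat.succ_le_of_lt ht)
    ext ⟨a, y⟩
    simp only [mem_filter, mem_image, mem_Icc, Prod.mk.injEq]
    constructor
    · rintro ⟨⟨hq, hlev⟩, rfl⟩
      exact ⟨y, (levelOf_eq_iff hm (hS.one_le_row _ hq)).1 hlev, rfl, rfl⟩
    · rintro ⟨y, hy, rfl, rfl⟩
      exact ⟨⟨hS.down_closed p hp y (by omega) (by omega),
        (levelOf_eq_iff hm (by omega)).2 hy⟩, rfl⟩
  have hrest : (S.filter fun q => levelOf m q.2 = t).filter (fun q => ¬q.1 = p.1) =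
      (contract m S p).filter fun q => levelOf m q.2 = t := by
    rw [contract, filter_filter, filter_filter]
    refine filter_congr fun q _ => ?_
    simp only [NonAttacking]
    grind
  rw [levelCount, levelCount, ← card_filter_add_card_filter_not (p := fun q => q.1 = p.1),
    hcol, hrest, card_image_of_injective _ (Prod.mk_right_injective p.1), Nat.card_Icc, add_comm]
  omega

lemma levelProd_erase_add_levelProd_contract (hS : IsBoard m C S) {n : ℕ} (hC : C.card = n + 1)
    (hp : p ∈ S) (htop : ∀ q ∈ S, q.2 ≤ p.2) (x : ℝ) :
    levelProd m (n + 1) (S.erase p) x + levelProd m n (contract m S p) x =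
      levelProd m (n + 1) S x := by
  set t₀ := levelOf m p.2
  have hlt : t₀ < n + 1 := hC ▸ hS.levelOf_lt_card hp
  set f := fun j : ℕ => x + (levelCount m S (n + 1 - j) : ℝ) - (m : ℝ) * ((j : ℝ) - 1) with hf
  have hj₀ : n + 1 - t₀ ∈ Icc 1 (n + 1) := mem_Icc.2 ⟨by omega, by omega⟩
  have herase : levelProd m (n + 1) (S.erase p) x =
      (f (n + 1 - t₀) - 1) * ∏ j ∈ (Icc 1 (n + 1)).erase (n + 1 - t₀), f j := by
    rw [levelProd, ← mul_prod_erase _ _ hj₀]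
    congr 1
    · have h := levelCount_erase_add (m := m) hp (n + 1 - (n + 1 - t₀))
      rw [if_pos (by omega)] at h
      simp only [hf, ← h]
      push_cast
      ring
    · refine prod_congr rfl fun j hj => ?_
      have h := levelCount_erase_add (m := m) hp (n + 1 - j)
      rw [if_neg (by simp only [mem_erase, mem_Icc] at hj; omega), add_zero] at h
      rw [h]
  have hcontract : levelProd m n (contract m S p) x =
      ∏ j ∈ (Icc 1 (n + 1)).erase (n + 1 - t₀), f j := by
    rw [prod_Icc_erase f (by omega) (by omega), levelProd]
    refine prod_congr rfl fun j hj => ?_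
    rw [mem_Icc] at hj
    simp only [hf]
    split_ifs with h
    · rw [levelCount_contract_eq_zero htop (by omega), levelCount_eq_zero_of_top_lt htop (by omega)]
    · rw [levelCount_eq_levelCount_contract_add hS hp (show n + 1 - (j + 1) < t₀ by omega),
        show n + 1 - (j + 1) = n - j by omega]
      push_cast
      ring
  rw [herase, hcontract, levelProd, ← mul_prod_erase _ _ hj₀]
  ring

end TopCell

theorem rookPoly_eq_levelProd {C : Finset ℕ} {S : Finset (ℕ × ℕ)} (hS : IsBoard m C S) (x : ℝ) :
    rookPoly m C.card S x = levelProd m C.card S x := by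
  induction S using Finset.strongInduction generalizing C with
  | H S ih =>
  obtain rfl | hne := S.eq_empty_or_nonempty
  · rw [rookPoly_empty, levelProd_empty]
  obtain ⟨p, hp, htop⟩ := S.exists_max_image Prod.snd hne
  have hC : C.card = (C.erase p.1).card + 1 := (card_erase_add_one (hS.col_mem p hp)).symm
  calc rookPoly m C.card S x
      = rookPoly m C.card (S.erase p) x + rookPoly m (C.erase p.1).card (contract m S p) x := by
        rw [hC, rookPoly_succ hp]
    _ = levelProd m C.card (S.erase p) x + levelProd m (C.erase p.1).card (contract m S p) x := by
        rw [ih _ (erase_ssubset hp) (hS.erase_top htop),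
          ih _ (contract_ssubset hp) (hS.contract_top hp htop)]
    _ = levelProd m C.card S x := by
        rw [hC]
        exact levelProd_erase_add_levelProd_contract hS hC hp htop x

end LevelRook

theorem statement3_general (m : ℕ) (n : ℕ) (b : ℕ → ℕ)
    (hbd : ∀ i, i < n → b i ≤ m * n) (x : ℝ) :
    ∑ k ∈ Finset.range (n + 1), (mLevelRookNum m n b k : ℝ) * mfall x m (n - k) =
      ∏ j ∈ Finset.Icc 1 n, (x + (levelNum m n b j : ℝ) - (m : ℝ) * ((j : ℝ) - 1)) := by
  simp only [LevelRook.mLevelRookNum_eq_card_placements, LevelRook.levelNum_eq_levelCount]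
  simpa only [LevelRook.rookPoly, LevelRook.levelProd, Finset.card_range] using
    LevelRook.rookPoly_eq_levelProd (LevelRook.isBoard_cellFinset hbd) x

/-- level-number factorization.  For a Ferrers board
`B = (b_1, …, b_n)` contained in the first `n` levels,
`p_m(B,x) = ∏_{j=1}^n (x + l_j - m(j-1))` where `l_j` is the `j`-th level number. -/
theorem statement3 (m : ℕ) (hm : 0 < m) (n : ℕ) (b : ℕ → ℕ)
    (hb : FerrersMono n b) (hbd : ∀ i, i < n → b i ≤ m * n) (x : ℝ) :
    ∑ k ∈ Finset.range (n + 1), (mLevelRookNum m n b k : ℝ) * mfall x m (n - k) =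
      ∏ j ∈ Finset.Icc 1 n, (x + (levelNum m n b j : ℝ) - (m : ℝ) * ((j : ℝ) - 1)) :=
  statement3_general m n b hbd x
end

section
/- Fix a positive integer m and let B = (b_1, ..., b_n) be a singleton board with respect to m. Then for every real number x, Σ_{k=0}^{n} f_{k,m}(B) · x↓_{n-k,m} = Σ_{k=0}^{n} r_{k,m}(B) · x↓_{n-k,m}; that is, the m-weighted file placement polynomial of B equals the m-level rook polynomial of B. -/
open scoped Classical

namespace S6
open Finset

/-! ### Basic lemmas about `mfall`, `levelOf`, `wtm` -/

lemma mfall_succ (x : ℝ) (m k : ℕ) : mfall x m (k + 1) = mfall x m k * (x - m * k) :=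
  Finset.prod_range_succ _ _

lemma mfall_one (x : ℝ) (m : ℕ) : mfall x m 1 = x := by
  simp [mfall]

/-- The rows of level `l` (0-indexed level, 1-indexed rows). -/
def J (m l : ℕ) : Finset ℕ := Finset.Icc (l * m + 1) (l * m + m)

lemma card_J (m l : ℕ) : (J m l).card = m := by
  simp [J]

lemma one_le_of_mem_J {m l j : ℕ} (h : j ∈ J m l) : 1 ≤ j := by
  simp only [J, Finset.mem_Icc] at h; omega

lemma levelOf_eq_iff {m l j : ℕ} (hm : 0 < m) (hj : 1 ≤ j) :
    levelOf m j = l ↔ j ∈ J m l := by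
  unfold levelOf
  simp only [J, Finset.mem_Icc]
  constructor
  · rintro rfl
    have h1 := Nat.div_add_mod (j - 1) m
    have h2 := Nat.mod_lt (j - 1) hm
    have h3 : (j - 1) / m * m = m * ((j - 1) / m) := Nat.mul_comm _ _
    omega
  · rintro ⟨h1, h2⟩
    have h3 : (l + 1) * m = l * m + m := by ring
    have h4 : (j - 1) / m = l := Nat.div_eq_of_lt_le (by omega) (by omega)
    omega

/-- The number of cells of `F` in row `j`. -/
noncomputable def cnt (F : Finset (ℕ × ℕ)) (j : ℕ) : ℕ :=
  (F.filter fun p => p.2 = j).card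

lemma wtm_def (m : ℕ) (F : Finset (ℕ × ℕ)) :
    wtm m F = ∏ j ∈ F.image Prod.snd, mfall 1 m (cnt F j) := rfl

lemma cnt_insert (F : Finset (ℕ × ℕ)) (p : ℕ × ℕ) (hp : p ∉ F) (j : ℕ) :
    cnt (insert p F) j = cnt F j + (if p.2 = j then 1 else 0) := by
  unfold cnt
  rw [Finset.filter_insert]
  split
  · rw [Finset.card_insert_of_notMem (fun h => hp (Finset.mem_filter.1 h).1)]
  · simp

lemma wtm_insert (m : ℕ) (F : Finset (ℕ × ℕ)) (p : ℕ × ℕ) (hp : p ∉ F) :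
    wtm m (insert p F) = wtm m F * (1 - m * cnt F p.2) := by
  have himg : (insert p F).image Prod.snd = insert p.2 (F.image Prod.snd) :=
    Finset.image_insert _ _ _
  by_cases hmem : p.2 ∈ F.image Prod.snd
  · rw [wtm_def, himg, Finset.insert_eq_self.2 hmem]
    rw [← Finset.mul_prod_erase _ _ hmem, wtm_def, ← Finset.mul_prod_erase _ _ hmem]
    have h1 : cnt (insert p F) p.2 = cnt F p.2 + 1 := by
      rw [cnt_insert F p hp]; simp
    have h2 : ∀ j ∈ (F.image Prod.snd).erase p.2,
        mfall 1 m (cnt (insert p F) j) = mfall 1 m (cnt F j) := by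
      intro j hj
      rw [cnt_insert F p hp, if_neg (Ne.symm (Finset.ne_of_mem_erase hj)), add_zero]
    rw [h1, mfall_succ, Finset.prod_congr rfl h2]
    push_cast
    ring
  · rw [wtm_def, himg, Finset.prod_insert hmem]
    have h0 : cnt F p.2 = 0 := by
      rw [cnt, Finset.card_eq_zero, Finset.filter_eq_empty_iff]
      intro q hq hq2
      exact hmem (Finset.mem_image.2 ⟨q, hq, hq2⟩)
    have h1 : cnt (insert p F) p.2 = 1 := by
      rw [cnt_insert F p hp, h0]; simp
    have h2 : ∀ j ∈ F.image Prod.snd,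
        mfall 1 m (cnt (insert p F) j) = mfall 1 m (cnt F j) := by
      intro j hj
      rw [cnt_insert F p hp, if_neg (fun h => hmem (by rw [h]; exact hj)), add_zero]
    rw [h1, mfall_one, Finset.prod_congr rfl h2, h0, wtm_def (F := F)]
    push_cast
    ring

end S6

namespace S6

/-! ### Cells determined by a choice function on a set of columns -/

/-- Given a column set `C` and a choice `g` of a row for each column, the corresponding
set of cells. -/
noncomputable def cells (C : Finset ℕ) (g : ∀ a ∈ C, ℕ) : Finset (ℕ × ℕ) :=
  C.attach.image fun i => (i.1, g i.1 i.2)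

lemma mem_cells {C : Finset ℕ} {g : ∀ a ∈ C, ℕ} {p : ℕ × ℕ} :
    p ∈ cells C g ↔ ∃ (i : ℕ) (hi : i ∈ C), p = (i, g i hi) := by
  simp only [cells, Finset.mem_image, Finset.mem_attach, true_and, Subtype.exists]
  constructor
  · rintro ⟨i, hi, rfl⟩; exact ⟨i, hi, rfl⟩
  · rintro ⟨i, hi, rfl⟩; exact ⟨i, hi, rfl⟩

lemma fst_mem_of_mem_cells {C : Finset ℕ} {g : ∀ a ∈ C, ℕ} {p : ℕ × ℕ}
    (h : p ∈ cells C g) : p.1 ∈ C := by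
  obtain ⟨i, hi, rfl⟩ := mem_cells.1 h; exact hi

lemma mk_mem_cells {C : Finset ℕ} (g : ∀ a ∈ C, ℕ) {i : ℕ} (hi : i ∈ C) :
    (i, g i hi) ∈ cells C g := mem_cells.2 ⟨i, hi, rfl⟩

lemma card_cells (C : Finset ℕ) (g : ∀ a ∈ C, ℕ) : (cells C g).card = C.card := by
  rw [cells, Finset.card_image_of_injective _ (fun x y hxy => Subtype.ext (by
    have := congrArg Prod.fst hxy; exact this)), Finset.card_attach]

lemma cells_cons {C : Finset ℕ} (a : ℕ) (ha : a ∉ C) (r : ℕ) (g : ∀ a ∈ C, ℕ) :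
    cells (insert a C) (Finset.Pi.cons C a r g) = insert (a, r) (cells C g) := by
  ext p
  rw [mem_cells, Finset.mem_insert, mem_cells]
  constructor
  · rintro ⟨i, hi, rfl⟩
    rcases Finset.mem_insert.1 hi with h | hiC
    · left; subst h; rw [Finset.Pi.cons_same]
    · right
      refine ⟨i, hiC, ?_⟩
      rw [Finset.Pi.cons_ne (fun h => ha (by rw [h]; exact hiC))]
  · rintro (rfl | ⟨i, hi, rfl⟩)
    · exact ⟨a, Finset.mem_insert_self a C, by rw [Finset.Pi.cons_same]⟩
    · refine ⟨i, Finset.mem_insert_of_mem hi, ?_⟩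
      rw [Finset.Pi.cons_ne (fun h => ha (by rw [h]; exact hi))]

/-- Summing row counts over the rows of a level gives the number of cells in the level. -/
lemma sum_cnt_level {m : ℕ} (hm : 0 < m) (l : ℕ) (F : Finset (ℕ × ℕ))
    (h1 : ∀ p ∈ F, 1 ≤ p.2) :
    ∑ r ∈ J m l, cnt F r = (F.filter fun p => levelOf m p.2 = l).card := by
  rw [Finset.card_eq_sum_card_fiberwise (f := Prod.snd) (t := J m l)
    (fun p hp => by
      have hp' := Finset.mem_filter.1 hp
      exact (levelOf_eq_iff hm (h1 p hp'.1)).1 hp'.2)]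
  refine Finset.sum_congr rfl fun r hr => ?_
  unfold cnt
  congr 1
  rw [Finset.filter_filter]
  exact Finset.filter_congr fun p hp =>
    ⟨fun h => ⟨by rw [h]; exact (levelOf_eq_iff hm (one_le_of_mem_J hr)).2 hr, h⟩,
     fun h => h.2⟩

/-- The key cancellation identity: summing the weights over all ways of choosing, for
each column in `C`, a row of level `l`. -/
lemma key_sum {m : ℕ} (hm : 0 < m) (l : ℕ) (K : Finset (ℕ × ℕ))
    (hK2 : ∀ p ∈ K, 1 ≤ p.2) :
    ∀ C : Finset ℕ, (∀ p ∈ K, p.1 ∉ C) →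
    ∑ g ∈ C.pi (fun _ => J m l), wtm m (K ∪ cells C g) =
      wtm m K * ∏ k ∈ Finset.range C.card,
        ((m : ℝ) * (1 - (((K.filter fun p => levelOf m p.2 = l).card : ℝ) + k))) := by
  intro C
  induction C using Finset.induction with
  | empty =>
    intro _
    simp [cells, Finset.Pi.empty]
  | @insert a C ha ih =>
    intro hKC
    have hKC' : ∀ p ∈ K, p.1 ∉ C := fun p hp h => hKC p hp (Finset.mem_insert_of_mem h)
    have haK : ∀ p ∈ K, p.1 ≠ a := fun p hp h =>
      hKC p hp (h ▸ Finset.mem_insert_self a C)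
    -- cells of any pi-element have rows ≥ 1 and level l, and columns in C
    have hrow : ∀ g ∈ C.pi (fun _ => J m l), ∀ p ∈ K ∪ cells C g, 1 ≤ p.2 := by
      intro g hg p hp
      rcases Finset.mem_union.1 hp with hp | hp
      · exact hK2 p hp
      · obtain ⟨i, hi, rfl⟩ := mem_cells.1 hp
        exact one_le_of_mem_J (Finset.mem_pi.1 hg i hi)
    have hlevelcard : ∀ g ∈ C.pi (fun _ => J m l),
        ((K ∪ cells C g).filter fun p => levelOf m p.2 = l).card =
          (K.filter fun p => levelOf m p.2 = l).card + C.card := by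
      intro g hg
      have hdisj : Disjoint K (cells C g) := by
        rw [Finset.disjoint_left]
        intro p hp hp'
        exact hKC' p hp (fst_mem_of_mem_cells hp')
      rw [Finset.filter_union, Finset.card_union_of_disjoint
        (Finset.disjoint_filter_filter hdisj)]
      congr 1
      have : (cells C g).filter (fun p => levelOf m p.2 = l) = cells C g := by
        refine Finset.filter_true_of_mem fun p hp => ?_
        obtain ⟨i, hi, rfl⟩ := mem_cells.1 hp
        have := Finset.mem_pi.1 (by exact hg) i hi
        exact (levelOf_eq_iff hm (one_le_of_mem_J this)).2 this
      rw [this, card_cells]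
    -- rewrite the sum over pi (insert a C)
    rw [Finset.pi_insert ha]
    have hdisjim : ∀ x ∈ J m l, ∀ y ∈ J m l, x ≠ y →
        Disjoint ((C.pi fun _ => J m l).image (Finset.Pi.cons C a x))
          ((C.pi fun _ => J m l).image (Finset.Pi.cons C a y)) := by
      intro x _ y _ hxy
      rw [Finset.disjoint_left]
      rintro f hf hf'
      obtain ⟨g1, _, rfl⟩ := Finset.mem_image.1 hf
      obtain ⟨g2, _, heq⟩ := Finset.mem_image.1 hf'
      have : Finset.Pi.cons C a y g2 a (Finset.mem_insert_self a C) =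
          Finset.Pi.cons C a x g1 a (Finset.mem_insert_self a C) := by rw [heq]
      rw [Finset.Pi.cons_same, Finset.Pi.cons_same] at this
      exact hxy this.symm
    rw [Finset.sum_biUnion hdisjim]
    have hstep : ∀ r ∈ J m l,
        ∑ f ∈ (C.pi fun _ => J m l).image (Finset.Pi.cons C a r),
          wtm m (K ∪ cells (insert a C) f) =
        ∑ g ∈ C.pi (fun _ => J m l),
          wtm m (K ∪ cells C g) * (1 - m * cnt (K ∪ cells C g) r) := by
      intro r hr
      rw [Finset.sum_image (fun g1 _ g2 _ h => Finset.Pi.cons_injective ha h)]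
      refine Finset.sum_congr rfl fun g hg => ?_
      rw [cells_cons a ha r g, Finset.union_insert]
      have hnotmem : (a, r) ∉ K ∪ cells C g := by
        intro h
        rcases Finset.mem_union.1 h with h | h
        · exact haK _ h rfl
        · exact ha (fst_mem_of_mem_cells h)
      exact wtm_insert m _ (a, r) hnotmem
    rw [Finset.sum_congr rfl hstep, Finset.sum_comm]
    have hinner : ∀ g ∈ C.pi (fun _ => J m l),
        ∑ r ∈ J m l, wtm m (K ∪ cells C g) * (1 - m * cnt (K ∪ cells C g) r) =
        wtm m (K ∪ cells C g) *
          ((m : ℝ) * (1 - (((K.filter fun p => levelOf m p.2 = l).card : ℝ) + C.card))) := by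
      intro g hg
      rw [← Finset.mul_sum]
      congr 1
      rw [Finset.sum_sub_distrib, Finset.sum_const, card_J, ← Finset.mul_sum,
        ← Nat.cast_sum, sum_cnt_level hm l _ (hrow g hg), hlevelcard g hg]
      push_cast
      ring
    rw [Finset.sum_congr rfl hinner, ← Finset.sum_mul, ih hKC',
      Finset.card_insert_of_notMem ha, Finset.prod_range_succ]
    ring

end S6

namespace S6

/-! ### Boards and placements -/

lemma mem_cellFinset {n : ℕ} {b : ℕ → ℕ} {p : ℕ × ℕ} :
    p ∈ cellFinset n b ↔ p.1 < n ∧ 1 ≤ p.2 ∧ p.2 ≤ b p.1 := by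
  unfold cellFinset
  simp only [Finset.mem_filter, Finset.mem_product, Finset.mem_range, Finset.mem_Icc]
  constructor
  · rintro ⟨⟨h1, h2, _⟩, h4⟩; exact ⟨h1, h2, h4⟩
  · rintro ⟨h1, h2, h3⟩
    exact ⟨⟨h1, h2, le_trans h3 (Finset.le_sup (Finset.mem_range.2 h1))⟩, h3⟩

lemma mem_filePlacements {n k : ℕ} {b : ℕ → ℕ} {F : Finset (ℕ × ℕ)} :
    F ∈ filePlacements n b k ↔
      F ⊆ cellFinset n b ∧ F.card = k ∧
        ∀ p ∈ F, ∀ q ∈ F, p ≠ q → p.1 ≠ q.1 := by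
  unfold filePlacements
  rw [Finset.mem_filter, Finset.mem_powerset]

lemma col_inj {n k : ℕ} {b : ℕ → ℕ} {F : Finset (ℕ × ℕ)}
    (hF : F ∈ filePlacements n b k) {p q : ℕ × ℕ} (hp : p ∈ F) (hq : q ∈ F)
    (h : p.1 = q.1) : p = q := by
  by_contra hne
  exact (mem_filePlacements.1 hF).2.2 p hp q hq hne h

lemma mono_chain {n : ℕ} {b : ℕ → ℕ} (hmono : FerrersMono n b) :
    ∀ {i i' : ℕ}, i ≤ i' → i' < n → b i ≤ b i' := by
  intro i i' h hn
  induction i' with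
  | zero => have : i = 0 := by omega
            rw [this]
  | succ i' ih =>
    rcases Nat.lt_or_ge i (i' + 1) with hlt | hge
    · exact le_trans (ih (by omega) (by omega)) (hmono i' hn)
    · have : i = i' + 1 := by omega
      rw [this]

/-- On a singleton board, if column `i0` contains a cell of level `l` then every column
`i` to the right of `i0` contains the whole level `l`. -/
lemma board_level {m n : ℕ} {b : ℕ → ℕ} (hm : 0 < m) (hB : IsSingletonBoard m n b)
    {l i0 i j j0 : ℕ} (hji0 : j0 ≤ b i0) (hj0l : j0 ∈ J m l)
    (hlt : i0 < i) (hin : i < n) (hj : j ∈ J m l) : (i, j) ∈ cellFinset n b := by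
  obtain ⟨hmono, hsing⟩ := hB
  simp only [J, Finset.mem_Icc] at hj0l hj
  rw [mem_cellFinset]
  refine ⟨hin, by omega, ?_⟩
  show j ≤ b i
  rcases le_or_gt (l * m + m) (b i0) with hcase | hcase
  · have := mono_chain hmono (le_of_lt hlt) hin
    omega
  · have hexp : (l + 1) * m = l * m + m := by ring
    have hdiv : b i0 / m = l := Nat.div_eq_of_lt_le (by omega) (by omega)
    have hfloor : mfloor m (b i0) = m * l := by rw [mfloor, hdiv]
    have hml : m * l = l * m := Nat.mul_comm _ _
    have hrem : b i0 - mfloor m (b i0) ≠ 0 := by rw [hfloor]; omega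
    have hstep := hsing i0 (by omega) hrem
    rw [hfloor, mfloor] at hstep
    have h1 : m * (b (i0 + 1) / m) ≤ b (i0 + 1) := Nat.mul_div_le _ _
    have h2 : l < b (i0 + 1) / m := by
      exact lt_of_mul_lt_mul_left hstep (Nat.zero_le m)
    have h3 : b (i0 + 1) ≤ b i := mono_chain hmono (by omega) hin
    have h4 : m * (l + 1) ≤ m * (b (i0 + 1) / m) := Nat.mul_le_mul_left m (by omega)
    have h5 : m * (l + 1) = l * m + m := by ring
    omega

/-! ### The distinguished level, leftmost column, and the invariant `Phi` -/

/-- The distinguished (lowest repeated) level of a placement. -/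
noncomputable def dl (m : ℕ) (F : Finset (ℕ × ℕ)) : ℕ :=
  sInf {l | 2 ≤ (rooksInLevel m F l).card}

lemma rooksInLevel_def (m : ℕ) (F : Finset (ℕ × ℕ)) (l : ℕ) :
    rooksInLevel m F l = F.filter fun p => levelOf m p.2 = l := rfl

lemma dl_set_nonempty {m : ℕ} {F : Finset (ℕ × ℕ)} (hbad : ¬ NoLevelRepeat m F) :
    {l | 2 ≤ (rooksInLevel m F l).card}.Nonempty := by
  rw [NoLevelRepeat] at hbad
  push_neg at hbad
  obtain ⟨p, hp, q, hq, hne, hlv⟩ := hbad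
  refine ⟨levelOf m p.2, ?_⟩
  have hsub : ({p, q} : Finset (ℕ × ℕ)) ⊆ rooksInLevel m F (levelOf m p.2) := by
    intro r hr
    rcases Finset.mem_insert.1 hr with rfl | hr
    · exact Finset.mem_filter.2 ⟨hp, rfl⟩
    · rw [Finset.mem_singleton] at hr; subst hr
      exact Finset.mem_filter.2 ⟨hq, hlv.symm⟩
  calc 2 = ({p, q} : Finset (ℕ × ℕ)).card := (Finset.card_pair hne).symm
    _ ≤ _ := Finset.card_le_card hsub

lemma dl_spec {m : ℕ} {F : Finset (ℕ × ℕ)} (hbad : ¬ NoLevelRepeat m F) :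
    2 ≤ (rooksInLevel m F (dl m F)).card :=
  Nat.sInf_mem (dl_set_nonempty hbad)

lemma dl_congr {m : ℕ} {F F' : Finset (ℕ × ℕ)}
    (h : ∀ l, (rooksInLevel m F l).card = (rooksInLevel m F' l).card) :
    dl m F = dl m F' := by
  unfold dl
  congr 1
  ext l
  rw [Set.mem_setOf_eq, Set.mem_setOf_eq, h]

/-- The leftmost column of the distinguished level. -/
noncomputable def col0 (m : ℕ) (F : Finset (ℕ × ℕ)) : ℕ :=
  sInf ↑((rooksInLevel m F (dl m F)).image Prod.fst)

/-- The invariant of the cancellation classes: the distinguished level, the cells outside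
the distinguished level, the leftmost cell of the distinguished level, and the columns of
the distinguished level. -/
noncomputable def Phi (m : ℕ) (F : Finset (ℕ × ℕ)) :
    ℕ × Finset (ℕ × ℕ) × Finset (ℕ × ℕ) × Finset ℕ :=
  (dl m F,
   F.filter fun p => levelOf m p.2 ≠ dl m F,
   F.filter fun p => levelOf m p.2 = dl m F ∧ p.1 = col0 m F,
   (F.filter fun p => levelOf m p.2 = dl m F).image Prod.fst)

end S6

namespace S6

lemma cells_image_fst (C : Finset ℕ) (g : ∀ a ∈ C, ℕ) :
    (cells C g).image Prod.fst = C := by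
  ext i
  simp only [Finset.mem_image]
  constructor
  · rintro ⟨p, hp, rfl⟩; exact fst_mem_of_mem_cells hp
  · intro hi; exact ⟨(i, g i hi), mk_mem_cells g hi, rfl⟩

lemma fiber_sum_zero {m n k : ℕ} {b : ℕ → ℕ} (hm : 0 < m) (hB : IsSingletonBoard m n b)
    {F₀ : Finset (ℕ × ℕ)} (hF₀ : F₀ ∈ filePlacements n b k)
    (hbad : ¬ NoLevelRepeat m F₀) :
    ∑ F ∈ (filePlacements n b k).filter
        (fun F => ¬ NoLevelRepeat m F ∧ Phi m F = Phi m F₀), wtm m F = 0 := by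
  classical
  obtain ⟨hF₀sub, hF₀card, hF₀col⟩ := mem_filePlacements.1 hF₀
  set l := dl m F₀ with hldef
  set i0 := col0 m F₀ with hi0def
  set C : Finset ℕ := (rooksInLevel m F₀ l).image Prod.fst with hCdef
  set C' : Finset ℕ := C.erase i0 with hC'def
  set K : Finset (ℕ × ℕ) := F₀.filter (fun p => levelOf m p.2 ≠ l ∨ p.1 = i0) with hKdef
  have hC'spec : ∀ {i}, i ∈ C' → i ≠ i0 ∧ i ∈ C := by
    intro i hi
    rw [hC'def] at hi
    exact Finset.mem_erase.1 hi
  have hC'intro : ∀ {i}, i ≠ i0 → i ∈ C → i ∈ C' := by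
    intro i h1 h2
    rw [hC'def]
    exact Finset.mem_erase.2 ⟨h1, h2⟩
  have hKmem : ∀ p, p ∈ K ↔ p ∈ F₀ ∧ (levelOf m p.2 ≠ l ∨ p.1 = i0) := by
    intro p
    rw [hKdef]
    exact Finset.mem_filter
  have h2 : 2 ≤ (rooksInLevel m F₀ l).card := dl_spec hbad
  have hinjR : Set.InjOn (Prod.fst : ℕ × ℕ → ℕ) ↑(rooksInLevel m F₀ l) := by
    intro p hp q hq h
    exact col_inj hF₀ (Finset.mem_filter.1 (Finset.mem_coe.1 hp)).1
      (Finset.mem_filter.1 (Finset.mem_coe.1 hq)).1 h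
  have hCcard : C.card = (rooksInLevel m F₀ l).card := Finset.card_image_of_injOn hinjR
  have hCne : C.Nonempty := Finset.card_pos.1 (by omega)
  have hcol0eq : i0 = sInf ↑C := by
    rw [hi0def]
    unfold col0
    rw [← hldef, ← hCdef]
  have hi0C : i0 ∈ C := by
    have : sInf ↑C ∈ (↑C : Set ℕ) := Nat.sInf_mem (Finset.coe_nonempty.2 hCne)
    rw [hcol0eq]
    exact_mod_cast this
  have hi0_le : ∀ i ∈ C, i0 ≤ i := by
    intro i hi
    rw [hcol0eq]
    exact Nat.sInf_le (Finset.mem_coe.2 hi)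
  obtain ⟨p0, hp0R, hp01⟩ := Finset.mem_image.1 hi0C
  obtain ⟨hp0F, hp0lev⟩ := Finset.mem_filter.1 hp0R
  have hp0cell := mem_cellFinset.1 (hF₀sub hp0F)
  have hp0J : p0.2 ∈ J m l := (levelOf_eq_iff hm hp0cell.2.1).1 hp0lev
  have hC'card : C'.card = C.card - 1 := by
    rw [hC'def]; exact Finset.card_erase_of_mem hi0C
  have hC'ne : C'.Nonempty := Finset.card_pos.1 (by omega)
  have hsingle : F₀.filter (fun p => levelOf m p.2 = l ∧ p.1 = i0) = {p0} := by
    ext q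
    rw [Finset.mem_filter, Finset.mem_singleton]
    constructor
    · rintro ⟨hqF, hql, hqi⟩
      exact col_inj hF₀ hqF hp0F (by rw [hqi, hp01])
    · rintro rfl
      exact ⟨hp0F, hp0lev, hp01⟩
  have hKsplit : K.filter (fun p => levelOf m p.2 = l) = {p0} := by
    rw [hKdef, Finset.filter_filter, ← hsingle]
    apply Finset.filter_congr
    intro p _
    constructor
    · rintro ⟨h1, h2⟩
      exact ⟨h2, h1.resolve_left (not_not_intro h2)⟩
    · rintro ⟨h1, h2⟩
      exact ⟨Or.inr h2, h1⟩
  have hK1 : (K.filter fun p => levelOf m p.2 = l).card = 1 := by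
    rw [hKsplit]; exact Finset.card_singleton _
  have hKsub : K ⊆ F₀ := by rw [hKdef]; exact Finset.filter_subset _ _
  have hK2 : ∀ p ∈ K, 1 ≤ p.2 := fun p hp => (mem_cellFinset.1 (hF₀sub (hKsub hp))).2.1
  have hCmem : ∀ i ∈ C, ∃ q ∈ F₀, levelOf m q.2 = l ∧ q.1 = i := by
    intro i hi
    rw [hCdef] at hi
    obtain ⟨q, hqR, rfl⟩ := Finset.mem_image.1 hi
    obtain ⟨hqF, hql⟩ := Finset.mem_filter.1 hqR
    exact ⟨q, hqF, hql, rfl⟩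
  have hKC' : ∀ p ∈ K, p.1 ∉ C' := by
    intro p hp hmem
    obtain ⟨hne, hiC⟩ := hC'spec hmem
    obtain ⟨hpF, hor⟩ := (hKmem p).1 hp
    rcases hor with hlev | hcol
    · obtain ⟨q, hqF, hql, hqi⟩ := hCmem p.1 hiC
      have : q = p := col_inj hF₀ hqF hpF hqi
      rw [this] at hql
      exact hlev hql
    · exact hne hcol
  have hC'n : ∀ i ∈ C', i < n ∧ i0 < i := by
    intro i hi
    obtain ⟨hne, hiC⟩ := hC'spec hi
    obtain ⟨q, hqF, _, hqi⟩ := hCmem i hiC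
    have := (mem_cellFinset.1 (hF₀sub hqF)).1
    exact ⟨hqi ▸ this, lt_of_le_of_ne (hi0_le i hiC) (Ne.symm hne)⟩
  have hboard : ∀ i ∈ C', ∀ j ∈ J m l, (i, j) ∈ cellFinset n b := by
    intro i hi j hj
    exact board_level hm hB (hp01 ▸ hp0cell.2.2) hp0J (hC'n i hi).2 (hC'n i hi).1 hj
  have hdisjKC : ∀ g : ∀ a ∈ C', ℕ, Disjoint K (cells C' g) := by
    intro g
    rw [Finset.disjoint_left]
    intro p hp hp'
    exact hKC' p hp (fst_mem_of_mem_cells hp')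
  have hkcard : K.card + C'.card = k := by
    have hsplit := Finset.card_filter_add_card_filter_not
      (s := F₀) (p := fun p => levelOf m p.2 ≠ l ∨ p.1 = i0)
    have hneg : F₀.filter (fun p => ¬(levelOf m p.2 ≠ l ∨ p.1 = i0))
        = F₀.filter (fun p => levelOf m p.2 = l ∧ p.1 ≠ i0) := by
      apply Finset.filter_congr
      intro p _
      constructor
      · intro h
        push_neg at h
        exact h
      · intro h
        push_neg
        exact h
    have himg2 : (F₀.filter (fun p => levelOf m p.2 = l ∧ p.1 ≠ i0)).image Prod.fst = C' := by
      ext i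
      constructor
      · intro hi
        obtain ⟨q, hq, rfl⟩ := Finset.mem_image.1 hi
        obtain ⟨hqF, hql, hqi⟩ := Finset.mem_filter.1 hq
        refine hC'intro hqi ?_
        rw [hCdef]
        exact Finset.mem_image.2 ⟨q, Finset.mem_filter.2 ⟨hqF, hql⟩, rfl⟩
      · intro hi
        obtain ⟨hne, hiC⟩ := hC'spec hi
        obtain ⟨q, hqF, hql, hqi⟩ := hCmem i hiC
        exact Finset.mem_image.2 ⟨q, Finset.mem_filter.2 ⟨hqF, hql, hqi ▸ hne⟩, hqi⟩
    have hinj2 : Set.InjOn (Prod.fst : ℕ × ℕ → ℕ) ↑(F₀.filter (fun p => levelOf m p.2 = l ∧ p.1 ≠ i0)) := by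
      intro p hp q hq h
      exact col_inj hF₀ (Finset.mem_filter.1 (Finset.mem_coe.1 hp)).1
        (Finset.mem_filter.1 (Finset.mem_coe.1 hq)).1 h
    have hcard2 : (F₀.filter (fun p => levelOf m p.2 = l ∧ p.1 ≠ i0)).card = C'.card := by
      rw [← himg2, Finset.card_image_of_injOn hinj2]
    rw [hneg, hcard2, ← hKdef] at hsplit
    rw [hsplit, hF₀card]
  have hlevcells : ∀ g ∈ C'.pi (fun _ => J m l), ∀ p ∈ cells C' g, levelOf m p.2 = l := by
    intro g hg p hp
    obtain ⟨i, hi, rfl⟩ := mem_cells.1 hp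
    have := Finset.mem_pi.1 hg i hi
    exact (levelOf_eq_iff hm (one_le_of_mem_J this)).2 this
  have hp0K : p0 ∈ K := (hKmem p0).2 ⟨hp0F, Or.inr hp01⟩
  have hfiber : (filePlacements n b k).filter
      (fun F => ¬ NoLevelRepeat m F ∧ Phi m F = Phi m F₀)
      = (C'.pi fun _ => J m l).image (fun g => K ∪ cells C' g) := by
    ext F
    rw [Finset.mem_filter, Finset.mem_image]
    constructor
    · rintro ⟨hFP, _, hPhi⟩
      have h1 : dl m F = dl m F₀ := congrArg (fun x => x.1) hPhi
      have hd2 : F.filter (fun p => levelOf m p.2 ≠ dl m F)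
          = F₀.filter (fun p => levelOf m p.2 ≠ dl m F₀) := congrArg (fun x => x.2.1) hPhi
      have hd3 : F.filter (fun p => levelOf m p.2 = dl m F ∧ p.1 = col0 m F)
          = F₀.filter (fun p => levelOf m p.2 = dl m F₀ ∧ p.1 = col0 m F₀) :=
        congrArg (fun x => x.2.2.1) hPhi
      have hd4 : (F.filter fun p => levelOf m p.2 = dl m F).image Prod.fst
          = (F₀.filter fun p => levelOf m p.2 = dl m F₀).image Prod.fst :=
        congrArg (fun x => x.2.2.2) hPhi
      rw [h1, ← hldef] at hd2 hd3 hd4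
      have hd4' : (F.filter fun p => levelOf m p.2 = l).image Prod.fst = C := by
        rw [hd4, hCdef, rooksInLevel_def]
      have hcol0F : col0 m F = i0 := by
        unfold col0
        rw [h1, ← hldef, rooksInLevel_def, hd4', hcol0eq]
      rw [hcol0F, ← hi0def] at hd3
      have hex : ∀ i ∈ C', ∃ j, (i, j) ∈ F ∧ levelOf m j = l := by
        intro i hi
        have hiC : i ∈ C := (hC'spec hi).2
        rw [← hd4'] at hiC
        obtain ⟨q, hq, rfl⟩ := Finset.mem_image.1 hiC
        obtain ⟨hqF, hql⟩ := Finset.mem_filter.1 hq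
        exact ⟨q.2, by rw [Prod.mk.eta]; exact hqF, hql⟩
      refine ⟨fun i hi => (hex i hi).choose, ?_, ?_⟩
      · rw [Finset.mem_pi]
        intro i hi
        have hspec := (hex i hi).choose_spec
        have h1le : 1 ≤ (hex i hi).choose :=
          (mem_cellFinset.1 ((mem_filePlacements.1 hFP).1 hspec.1)).2.1
        exact (levelOf_eq_iff hm h1le).1 hspec.2
      · apply Finset.ext
        intro p
        rw [Finset.mem_union]
        constructor
        · intro hp
          rcases hp with hp | hp
          · obtain ⟨hpF₀, hor⟩ := (hKmem p).1 hp
            by_cases hlev : levelOf m p.2 = l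
            · rcases hor with hlev' | hcol
              · exact absurd hlev hlev'
              · have : p ∈ F.filter (fun p => levelOf m p.2 = l ∧ p.1 = i0) := by
                  rw [hd3]
                  exact Finset.mem_filter.2 ⟨hpF₀, hlev, hcol⟩
                exact (Finset.mem_filter.1 this).1
            · have : p ∈ F.filter (fun p => levelOf m p.2 ≠ l) := by
                rw [hd2]
                exact Finset.mem_filter.2 ⟨hpF₀, hlev⟩
              exact (Finset.mem_filter.1 this).1
          · obtain ⟨i, hi, rfl⟩ := mem_cells.1 hp
            exact ((hex i hi).choose_spec).1
        · intro hpF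
          by_cases hlev : levelOf m p.2 = l
          · by_cases hcol : p.1 = i0
            · left
              have hpmem : p ∈ F₀.filter (fun p => levelOf m p.2 = l ∧ p.1 = i0) := by
                rw [← hd3]
                exact Finset.mem_filter.2 ⟨hpF, hlev, hcol⟩
              exact (hKmem p).2 ⟨(Finset.mem_filter.1 hpmem).1, Or.inr hcol⟩
            · right
              have hpC : p.1 ∈ C := by
                rw [← hd4']
                exact Finset.mem_image_of_mem _ (Finset.mem_filter.2 ⟨hpF, hlev⟩)
              have hpC' : p.1 ∈ C' := hC'intro hcol hpC
              have hspec := (hex p.1 hpC').choose_spec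
              have hpe : p = (p.1, (hex p.1 hpC').choose) :=
                col_inj hFP hpF hspec.1 rfl
              rw [hpe]
              exact mk_mem_cells _ hpC'
          · left
            have hpmem : p ∈ F₀.filter (fun p => levelOf m p.2 ≠ l) := by
              rw [← hd2]
              exact Finset.mem_filter.2 ⟨hpF, hlev⟩
            exact (hKmem p).2 ⟨(Finset.mem_filter.1 hpmem).1, Or.inl hlev⟩
    · rintro ⟨g, hg, rfl⟩
      have hsubF : K ∪ cells C' g ⊆ cellFinset n b := by
        apply Finset.union_subset (hKsub.trans hF₀sub)
        intro p hp
        obtain ⟨i, hi, rfl⟩ := mem_cells.1 hp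
        exact hboard i hi _ (Finset.mem_pi.1 hg i hi)
      have hcardF : (K ∪ cells C' g).card = k := by
        rw [Finset.card_union_of_disjoint (hdisjKC g), card_cells, hkcard]
      have hcolF : ∀ p ∈ K ∪ cells C' g, ∀ q ∈ K ∪ cells C' g, p ≠ q → p.1 ≠ q.1 := by
        intro p hp q hq hne heq
        rcases Finset.mem_union.1 hp with hp' | hp' <;>
          rcases Finset.mem_union.1 hq with hq' | hq'
        · exact hne (col_inj hF₀ (hKsub hp') (hKsub hq') heq)
        · exact hKC' p hp' (heq ▸ fst_mem_of_mem_cells hq')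
        · exact hKC' q hq' (heq ▸ fst_mem_of_mem_cells hp')
        · obtain ⟨i, hi, rfl⟩ := mem_cells.1 hp'
          obtain ⟨i', hi', rfl⟩ := mem_cells.1 hq'
          simp only at heq
          subst heq
          exact hne rfl
      have hFP : K ∪ cells C' g ∈ filePlacements n b k :=
        mem_filePlacements.2 ⟨hsubF, hcardF, hcolF⟩
      obtain ⟨i1, hi1⟩ := hC'ne
      have hq1mem : (i1, g i1 hi1) ∈ K ∪ cells C' g :=
        Finset.mem_union_right _ (mk_mem_cells g hi1)
      have hp0mem : p0 ∈ K ∪ cells C' g := Finset.mem_union_left _ hp0K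
      have hi0ne : i0 ≠ i1 := fun h => (hC'spec hi1).1 h.symm
      have hbadF : ¬ NoLevelRepeat m (K ∪ cells C' g) := by
        intro hN
        apply hN p0 hp0mem (i1, g i1 hi1) hq1mem
          (fun h => hi0ne (by rw [← hp01, h]))
        rw [hp0lev]
        exact (hlevcells g hg _ (mk_mem_cells g hi1)).symm
      have e1 : (K ∪ cells C' g).filter (fun p => levelOf m p.2 = l)
          = {p0} ∪ cells C' g := by
        rw [Finset.filter_union, hKsplit, Finset.filter_true_of_mem (hlevcells g hg)]
      have e2 : (K ∪ cells C' g).filter (fun p => levelOf m p.2 ≠ l)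
          = F₀.filter (fun p => levelOf m p.2 ≠ l) := by
        rw [Finset.filter_union]
        have hc : (cells C' g).filter (fun p => levelOf m p.2 ≠ l) = ∅ := by
          rw [Finset.filter_eq_empty_iff]
          intro p hp
          exact not_not.2 (hlevcells g hg p hp)
        rw [hc, Finset.union_empty, hKdef, Finset.filter_filter]
        apply Finset.filter_congr
        intro p _
        constructor
        · rintro ⟨_, h⟩; exact h
        · intro h; exact ⟨Or.inl h, h⟩
      have hdisj1 : Disjoint ({p0} : Finset (ℕ × ℕ)) (cells C' g) := by
        rw [Finset.disjoint_singleton_left]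
        intro h
        have := fst_mem_of_mem_cells h
        rw [hp01] at this
        exact (hC'spec this).1 rfl
      have e4 : ((K ∪ cells C' g).filter (fun p => levelOf m p.2 = l)).image Prod.fst
          = C := by
        rw [e1, Finset.image_union, cells_image_fst, Finset.image_singleton, hp01,
          hC'def, ← Finset.insert_eq, Finset.insert_erase hi0C]
      have ecard : ∀ l', (rooksInLevel m (K ∪ cells C' g) l').card
          = (rooksInLevel m F₀ l').card := by
        intro l'
        by_cases hl' : l' = l
        · subst hl'
          rw [rooksInLevel_def, e1, Finset.card_union_of_disjoint hdisj1,
            Finset.card_singleton, card_cells]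
          omega
        · have : rooksInLevel m (K ∪ cells C' g) l' = rooksInLevel m F₀ l' := by
            rw [rooksInLevel_def, rooksInLevel_def, Finset.filter_union]
            have hc : (cells C' g).filter (fun p => levelOf m p.2 = l') = ∅ := by
              rw [Finset.filter_eq_empty_iff]
              intro p hp h
              exact hl' (by rw [← h, hlevcells g hg p hp])
            rw [hc, Finset.union_empty, hKdef, Finset.filter_filter]
            apply Finset.filter_congr
            intro p _
            constructor
            · rintro ⟨_, h⟩; exact h
            · intro h
              exact ⟨Or.inl (fun hh => hl' (by rw [← h, hh])), h⟩
          rw [this]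
      have edl : dl m (K ∪ cells C' g) = l := by
        rw [dl_congr ecard]
      have ecol0 : col0 m (K ∪ cells C' g) = i0 := by
        unfold col0
        rw [edl, rooksInLevel_def, e4]
        exact hcol0eq.symm
      have e3 : (K ∪ cells C' g).filter (fun p => levelOf m p.2 = l ∧ p.1 = i0)
          = {p0} := by
        ext q
        rw [Finset.mem_filter, Finset.mem_singleton]
        constructor
        · rintro ⟨hq, hql, hqi⟩
          rcases Finset.mem_union.1 hq with hq | hq
          · have : q ∈ K.filter (fun p => levelOf m p.2 = l) :=
              Finset.mem_filter.2 ⟨hq, hql⟩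
            rw [hKsplit] at this
            exact Finset.mem_singleton.1 this
          · exfalso
            have := fst_mem_of_mem_cells hq
            rw [hqi] at this
            exact (hC'spec this).1 rfl
        · rintro rfl
          exact ⟨hp0mem, hp0lev, hp01⟩
      refine ⟨hFP, hbadF, ?_⟩
      simp only [Phi, Prod.mk.injEq]
      refine ⟨?_, ?_, ?_, ?_⟩
      · rw [edl]
      · rw [edl, ← hldef, e2]
      · rw [edl, ecol0, ← hldef, ← hi0def, e3, hsingle]
      · rw [edl, ← hldef, e4, hCdef, rooksInLevel_def]
  have hinjimg : ∀ g1 ∈ C'.pi (fun _ => J m l), ∀ g2 ∈ C'.pi (fun _ => J m l),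
      K ∪ cells C' g1 = K ∪ cells C' g2 → g1 = g2 := by
    intro g1 _ g2 _ h
    funext i hi
    have hmem : (i, g1 i hi) ∈ K ∪ cells C' g2 := by
      rw [← h]
      exact Finset.mem_union_right _ (mk_mem_cells g1 hi)
    rcases Finset.mem_union.1 hmem with hmem | hmem
    · exact absurd hi (hKC' _ hmem)
    · obtain ⟨i', hi', heq⟩ := mem_cells.1 hmem
      have h1 : i = i' := congrArg Prod.fst heq
      subst h1
      exact congrArg Prod.snd heq
  rw [hfiber, Finset.sum_image hinjimg, key_sum hm l K hK2 C' hKC', hK1]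
  have hposC' : 0 < C'.card := by omega
  have hzero : ∏ x ∈ Finset.range C'.card, ((m : ℝ) * (1 - (((1 : ℕ) : ℝ) + x))) = 0 :=
    Finset.prod_eq_zero (Finset.mem_range.2 hposC') (by push_cast; ring)
  rw [hzero, mul_zero]

end S6

namespace S6

/-- The sum of weights over placements with a level repeat vanishes. -/
lemma bad_sum_zero {m n k : ℕ} {b : ℕ → ℕ} (hm : 0 < m) (hB : IsSingletonBoard m n b) :
    ∑ F ∈ (filePlacements n b k).filter (fun F => ¬ NoLevelRepeat m F), wtm m F = 0 := by
  classical
  rw [← Finset.sum_fiberwise_of_maps_to (g := Phi m)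
    (t := ((filePlacements n b k).filter (fun F => ¬ NoLevelRepeat m F)).image (Phi m))
    (fun F hF => Finset.mem_image_of_mem _ hF) (wtm m)]
  refine Finset.sum_eq_zero fun σ hσ => ?_
  obtain ⟨F₀, hF₀s, rfl⟩ := Finset.mem_image.1 hσ
  obtain ⟨hF₀, hbad⟩ := Finset.mem_filter.1 hF₀s
  rw [Finset.filter_filter]
  exact fiber_sum_zero hm hB hF₀ hbad

/-- A placement with no level repeat has weight 1. -/
lemma wtm_good {m : ℕ} {F : Finset (ℕ × ℕ)} (hg : NoLevelRepeat m F) : wtm m F = 1 := by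
  rw [wtm_def]
  rw [Finset.prod_eq_one]
  intro j hj
  obtain ⟨p, hp, hpj⟩ := Finset.mem_image.1 hj
  have hone : cnt F j = 1 := by
    rw [cnt, Finset.card_eq_one]
    refine ⟨p, ?_⟩
    rw [Finset.eq_singleton_iff_unique_mem]
    refine ⟨Finset.mem_filter.2 ⟨hp, hpj⟩, ?_⟩
    intro q hq
    obtain ⟨hqF, hqj⟩ := Finset.mem_filter.1 hq
    by_contra hne
    exact hg q hqF p hp hne (by rw [hqj, hpj])
  rw [hone, mfall_one]

lemma good_card {m n k : ℕ} {b : ℕ → ℕ} :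
    ((filePlacements n b k).filter (fun F => NoLevelRepeat m F)).card
      = mLevelRookNum m n b k := by
  classical
  unfold mLevelRookNum filePlacements
  rw [Finset.filter_filter]
  congr 1
  apply Finset.filter_congr
  intro P _
  constructor
  · rintro ⟨⟨hc, hcol⟩, hlev⟩
    exact ⟨hc, fun p hp q hq hne => ⟨hcol p hp q hq hne, hlev p hp q hq hne⟩⟩
  · rintro ⟨hc, h⟩
    exact ⟨⟨hc, fun p hp q hq hne => (h p hp q hq hne).1⟩,
      fun p hp q hq hne => (h p hp q hq hne).2⟩

/-- Statement 6, term by term. -/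
lemma termwise {m n : ℕ} (hm : 0 < m) {b : ℕ → ℕ} (hB : IsSingletonBoard m n b) (k : ℕ) :
    fWeightNum m n b k = (mLevelRookNum m n b k : ℝ) := by
  classical
  unfold fWeightNum
  rw [← Finset.sum_filter_add_sum_filter_not (filePlacements n b k)
    (fun F => NoLevelRepeat m F) (wtm m)]
  rw [bad_sum_zero hm hB, add_zero]
  rw [Finset.sum_congr rfl (fun F hF => wtm_good (Finset.mem_filter.1 hF).2),
    Finset.sum_const, nsmul_eq_mul, mul_one, good_card]

end S6

/-- For a singleton board `B` w.r.t. `m`, the `m`-weighted file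
placement polynomial equals the `m`-level rook polynomial:
`Σ_{k=0}^n f_{k,m}(B) x↓_{n-k,m} = Σ_{k=0}^n r_{k,m}(B) x↓_{n-k,m}`. -/
theorem statement6 (m : ℕ) (hm : 0 < m) (n : ℕ) (b : ℕ → ℕ)
    (hB : IsSingletonBoard m n b) (x : ℝ) :
    ∑ k ∈ Finset.range (n + 1), fWeightNum m n b k * mfall x m (n - k) =
      ∑ k ∈ Finset.range (n + 1), (mLevelRookNum m n b k : ℝ) * mfall x m (n - k) := by
  refine Finset.sum_congr rfl fun k _ => ?_
  rw [S6.termwise hm hB k]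
end
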